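/- arXiv:2305.04686 — 5 statements merged into one kernel-verified Lean document; each statement's English description precedes it below -/
import Mathlib

section
/- For every δ > 0 and every dimension s, the minimal size of a δ-cover for the family R^s of half-open axis-parallel boxes [x,y) in [0,1]^s satisfies N(δ, R^s) ≤ N(δ/2, C^s)^2, where C^s is the family of anchored boxes [0,x). -/
open MeasureTheory Set


open MeasureTheory Set

/-- `Γ` is a `δ`-cover of the family `𝒜` of subsets of `[0,1]^s`. -/
def IsDeltaCover {s : ℕ} (δ : ℝ) (𝒜 Γ : Set (Set (Fin s → ℝ))) : Prop :=
  Γ ⊆ 𝒜 ∧ ∀ A ∈ 𝒜, ∃ U ∈ Γ ∪ {∅}, ∃ V ∈ Γ ∪ {∅},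
    U ⊆ A ∧ A ⊆ V ∧ volume (V \ U) ≤ ENNReal.ofReal δ

/-- `Δ` is a `δ`-bracketing cover of the family `𝒜` of subsets of `[0,1]^s`. -/
def IsBracketingCover {s : ℕ} (δ : ℝ)
    (𝒜 : Set (Set (Fin s → ℝ))) (Δ : Set (Set (Fin s → ℝ) × Set (Fin s → ℝ))) : Prop :=
  Δ ⊆ 𝒜 ×ˢ 𝒜 ∧
    (∀ p ∈ Δ, p.1 ⊆ p.2 ∧ volume (p.2 \ p.1) ≤ ENNReal.ofReal δ) ∧
    ∀ A ∈ 𝒜, ∃ p ∈ Δ, p.1 ⊆ A ∧ A ⊆ p.2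

/-- The minimal size of a `δ`-cover of `𝒜` (as an extended natural number). -/
noncomputable def coverNum {s : ℕ} (δ : ℝ) (𝒜 : Set (Set (Fin s → ℝ))) : ℕ∞ :=
  sInf {n : ℕ∞ | ∃ Γ, IsDeltaCover δ 𝒜 Γ ∧ Γ.encard = n}

/-- The minimal size of a `δ`-bracketing cover of `𝒜` (as an extended natural number). -/
noncomputable def bracketNum {s : ℕ} (δ : ℝ) (𝒜 : Set (Set (Fin s → ℝ))) : ℕ∞ :=
  sInf {n : ℕ∞ | ∃ Δ, IsBracketingCover δ 𝒜 Δ ∧ Δ.encard = n}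

/-- The family of anchored boxes `[0,x)` with `x ∈ [0,1]^s`. -/
def anchoredFamily (s : ℕ) : Set (Set (Fin s → ℝ)) :=
  {C | ∃ x ∈ Set.Icc (0 : Fin s → ℝ) 1, C = Set.pi Set.univ fun i => Set.Ico 0 (x i)}

/-- The family of boxes `[x,y)` with `x, y ∈ [0,1]^s`, `x ≤ y`. -/
def boxFamily (s : ℕ) : Set (Set (Fin s → ℝ)) :=
  {C | ∃ x ∈ Set.Icc (0 : Fin s → ℝ) 1, ∃ y ∈ Set.Icc (0 : Fin s → ℝ) 1,
    x ≤ y ∧ C = Set.pi Set.univ fun i => Set.Ico (x i) (y i)}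

namespace CoverAux

variable {s : ℕ}

/-- The box `[p, q)`. -/
def mkBox (p q : Fin s → ℝ) : Set (Fin s → ℝ) :=
  Set.pi Set.univ fun i => Set.Ico (p i) (q i)

/-- The anchored box `[0, x)`. -/
def aBox (x : Fin s → ℝ) : Set (Fin s → ℝ) :=
  Set.pi Set.univ fun i => Set.Ico 0 (x i)

lemma mem_mkBox {p q t : Fin s → ℝ} : t ∈ mkBox p q ↔ ∀ i, p i ≤ t i ∧ t i < q i := by
  simp [mkBox, Set.mem_pi, Set.mem_Ico]

lemma mem_aBox {x t : Fin s → ℝ} : t ∈ aBox x ↔ ∀ i, 0 ≤ t i ∧ t i < x i := by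
  simp [aBox, Set.mem_pi, Set.mem_Ico]

lemma aBox_anchored {x : Fin s → ℝ} (hx : x ∈ Set.Icc (0 : Fin s → ℝ) 1) :
    aBox x ∈ anchoredFamily s := ⟨x, hx, rfl⟩

lemma aBox_zero_subset (y : Fin s → ℝ) : aBox (0 : Fin s → ℝ) ⊆ aBox y := by
  intro t ht
  rw [mem_aBox] at ht ⊢
  intro i
  have := ht i
  simp only [Pi.zero_apply] at this
  exact absurd this.2 (not_lt.mpr this.1)

open Classical in
/-- A corner for an anchored box, chosen by choice. -/
noncomputable def corner (G : Set (Fin s → ℝ)) : Fin s → ℝ :=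
  if h : G ∈ anchoredFamily s then h.choose else 0

lemma corner_mem (G : Set (Fin s → ℝ)) : corner G ∈ Set.Icc (0 : Fin s → ℝ) 1 := by
  unfold corner
  split
  · next h => exact h.choose_spec.1
  · exact ⟨le_refl _, zero_le_one⟩

lemma corner_eq {G : Set (Fin s → ℝ)} (h : G ∈ anchoredFamily s) : G = aBox (corner G) := by
  unfold corner
  rw [dif_pos h]
  exact h.choose_spec.2

lemma corner_lower {G : Set (Fin s → ℝ)} {y : Fin s → ℝ} (h : G ⊆ aBox y) :
    aBox (corner G) ⊆ aBox y := by
  by_cases hA : G ∈ anchoredFamily s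
  · rw [← corner_eq hA]; exact h
  · rw [show corner G = 0 from dif_neg hA]
    exact aBox_zero_subset y

lemma corner_upper {Γ : Set (Set (Fin s → ℝ))} (hΓ : Γ ⊆ anchoredFamily s)
    {G : Set (Fin s → ℝ)} (hG : G ∈ Γ ∪ {∅}) {y : Fin s → ℝ} (h : aBox y ⊆ G) :
    aBox y ⊆ aBox (corner G) := by
  by_cases hA : G ∈ anchoredFamily s
  · rw [← corner_eq hA]; exact h
  · have hGe : G = ∅ := by
      rcases hG with h' | h'
      · exact absurd (hΓ h') hA
      · exact h'
    rw [hGe] at h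
    exact fun t ht => absurd (h ht) (Set.notMem_empty t)

lemma eq_empty_of_not_mem {Γ : Set (Set (Fin s → ℝ))} {G : Set (Fin s → ℝ)}
    (hG : G ∈ Γ ∪ {∅}) (h : G ∉ Γ) : G = ∅ := by
  rcases hG with h' | h'
  · exact absurd h' h
  · exact h'

lemma aBox_corner_eq_empty (hs : 0 < s) {G : Set (Fin s → ℝ)} (hGe : G = ∅) :
    aBox (corner G) = ∅ := by
  by_cases hA : G ∈ anchoredFamily s
  · rw [← corner_eq hA, hGe]
  · rw [show corner G = 0 from dif_neg hA]
    exact Set.univ_pi_eq_empty (i := ⟨0, hs⟩) (by simp)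

lemma vol_corner_diff {Γ : Set (Set (Fin s → ℝ))} (hΓ : Γ ⊆ anchoredFamily s)
    {Gu Gv : Set (Fin s → ℝ)} (hGu : Gu ∈ Γ ∪ {∅}) {c : ENNReal}
    (hb : volume (Gv \ Gu) ≤ c) :
    volume (aBox (corner Gv) \ aBox (corner Gu)) ≤ c := by
  by_cases hv : Gv ∈ anchoredFamily s
  · by_cases hu : Gu ∈ anchoredFamily s
    · rw [← corner_eq hv, ← corner_eq hu]; exact hb
    · have hue : Gu = ∅ := by
        rcases hGu with h' | h'
        · exact absurd (hΓ h') hu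
        · exact h'
      calc volume (aBox (corner Gv) \ aBox (corner Gu))
          ≤ volume (aBox (corner Gv)) := measure_mono diff_subset
        _ = volume (Gv \ Gu) := by rw [← corner_eq hv, hue, diff_empty]
        _ ≤ c := hb
  · have h0 : corner Gv = 0 := dif_neg hv
    have : aBox (corner Gv) \ aBox (corner Gu) = ∅ := by
      rw [h0]
      exact diff_eq_empty.mpr (aBox_zero_subset _)
    rw [this]
    simp

lemma exists_nonpos_of_aBox_empty {g : Fin s → ℝ} (h : aBox g = ∅) : ∃ i, g i ≤ 0 := by
  by_contra hc
  push_neg at hc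
  have h0 : (0 : Fin s → ℝ) ∈ aBox g := mem_aBox.mpr fun i => ⟨le_refl _, hc i⟩
  rw [h] at h0
  exact h0

lemma mkBox_eq_empty {p g : Fin s → ℝ} (hp1 : p ≤ 1) (hg1 : g ≤ 1)
    (h : aBox p = ∅ ∨ aBox g = ∅) :
    mkBox (fun i => 1 - p i) g = ∅ := by
  rcases h with h | h
  · obtain ⟨i, hi⟩ := exists_nonpos_of_aBox_empty h
    refine Set.univ_pi_eq_empty (i := i) ?_
    rw [Set.Ico_eq_empty]
    have := hg1 i
    simp only [Pi.one_apply] at this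
    push_neg
    linarith
  · obtain ⟨i, hi⟩ := exists_nonpos_of_aBox_empty h
    refine Set.univ_pi_eq_empty (i := i) ?_
    rw [Set.Ico_eq_empty]
    have := hp1 i
    simp only [Pi.one_apply] at this
    push_neg
    linarith

lemma mkBox_mem_boxFamily {p q : Fin s → ℝ} (hp : p ∈ Set.Icc (0 : Fin s → ℝ) 1)
    (hq : q ∈ Set.Icc (0 : Fin s → ℝ) 1) : mkBox p q ∈ boxFamily s := by
  by_cases h : p ≤ q
  · exact ⟨p, hp, q, hq, h, rfl⟩
  · rw [Pi.le_def] at h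
    push_neg at h
    obtain ⟨i, hi⟩ := h
    refine ⟨0, ⟨le_refl _, zero_le_one⟩, 0, ⟨le_refl _, zero_le_one⟩, le_refl _, ?_⟩
    have h1 : mkBox p q = ∅ :=
      Set.univ_pi_eq_empty (i := i) (Set.Ico_eq_empty (not_lt.mpr hi.le))
    have h2 : (Set.pi Set.univ fun j => Set.Ico ((0 : Fin s → ℝ) j) ((0 : Fin s → ℝ) j)) = ∅ :=
      Set.univ_pi_eq_empty (i := i) (by simp)
    rw [h1, h2]

lemma inner_sub {u p x y : Fin s → ℝ} (hu1 : u ≤ 1) (hp1 : p ≤ 1) (hx1 : x ≤ 1)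
    (hGu : aBox u ⊆ aBox y) (hHu : aBox p ⊆ aBox (fun i => 1 - x i)) :
    mkBox (fun i => 1 - p i) u ⊆ mkBox x y := by
  intro t ht
  rw [mem_mkBox] at ht
  have hp0 : ∀ j, 0 < p j := by
    intro j
    by_contra hc
    push_neg at hc
    have h1 := (ht j).1
    have h2 := (ht j).2
    have h3 := hu1 j
    simp only [Pi.one_apply] at h3
    linarith
  have htu : t ∈ aBox u := mem_aBox.mpr fun i =>
    ⟨by have := (ht i).1; have := hp1 i; simp only [Pi.one_apply] at *; linarith, (ht i).2⟩
  have hty : ∀ i, t i < y i := fun i => (mem_aBox.mp (hGu htu) i).2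
  rw [mem_mkBox]
  intro i
  refine ⟨?_, hty i⟩
  by_contra hc
  push_neg at hc
  set z : Fin s → ℝ := fun j => if j = i then 1 - x i else 0 with hz_def
  have hz : z ∈ aBox p := by
    rw [mem_aBox]
    intro j
    by_cases hj : j = i
    · subst hj
      simp only [hz_def, if_pos rfl]
      constructor
      · have := hx1 j; simp only [Pi.one_apply] at this; linarith
      · have h1 := (ht j).1
        linarith
    · simp only [hz_def, if_neg hj]
      exact ⟨le_refl _, hp0 j⟩
  have := (mem_aBox.mp (hHu hz) i).2
  simp only [hz_def, if_pos rfl] at this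
  linarith

lemma outer_sub {v q x y : Fin s → ℝ} (hq0 : (0 : Fin s → ℝ) ≤ q) (hx0 : (0 : Fin s → ℝ) ≤ x)
    (hy1 : y ≤ 1)
    (hGv : aBox y ⊆ aBox v) (hHv : aBox (fun i => 1 - x i) ⊆ aBox q) :
    mkBox x y ⊆ mkBox (fun i => 1 - q i) v := by
  intro t ht
  rw [mem_mkBox] at ht
  have hta : t ∈ aBox y := mem_aBox.mpr fun i =>
    ⟨le_trans (hx0 i) (ht i).1, (ht i).2⟩
  have htv : ∀ i, t i < v i := fun i => (mem_aBox.mp (hGv hta) i).2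
  rw [mem_mkBox]
  intro i
  refine ⟨?_, htv i⟩
  by_contra hc
  push_neg at hc
  set z : Fin s → ℝ := fun j => if j = i then (q i + (1 - t i)) / 2 else 0 with hz_def
  have hz : z ∈ aBox (fun j => 1 - x j) := by
    rw [mem_aBox]
    intro j
    by_cases hj : j = i
    · subst hj
      simp only [hz_def, if_pos rfl]
      have h1 := hq0 j
      simp only [Pi.zero_apply] at h1
      have h2 := (ht j).1
      constructor
      · linarith
      · linarith
    · simp only [hz_def, if_neg hj]
      refine ⟨le_refl _, ?_⟩
      have h1 := (ht j).1
      have h2 := (ht j).2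
      have h3 := hy1 j
      have h4 := hx0 j
      simp only [Pi.one_apply, Pi.zero_apply] at h3 h4
      linarith
  have := (mem_aBox.mp (hHv hz) i).2
  simp only [hz_def, if_pos rfl] at this
  have h1 := hq0 i
  simp only [Pi.zero_apply] at h1
  linarith

lemma diff_sub {u p v q : Fin s → ℝ} (hq1 : q ≤ 1) (hv1 : v ≤ 1) :
    mkBox (fun i => 1 - q i) v \ mkBox (fun i => 1 - p i) u ⊆
      (aBox v \ aBox u) ∪
      (mkBox (fun i => 1 - q i) 1 \ mkBox (fun i => 1 - p i) 1) := by
  rintro t ⟨htV, htU⟩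
  rw [mem_mkBox] at htV
  have h1 : t ∈ aBox v := mem_aBox.mpr fun i =>
    ⟨by have := (htV i).1; have := hq1 i; simp only [Pi.one_apply] at *; linarith, (htV i).2⟩
  have h2 : t ∈ mkBox (fun i => 1 - q i) (1 : Fin s → ℝ) := mem_mkBox.mpr fun i => by
    refine ⟨(htV i).1, ?_⟩
    have := hv1 i
    simp only [Pi.one_apply] at *
    exact lt_of_lt_of_le (htV i).2 this
  have h3 : ¬ ∀ i, 1 - p i ≤ t i ∧ t i < u i := fun hcon => htU (mem_mkBox.mpr hcon)
  push_neg at h3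
  obtain ⟨i, hi⟩ := h3
  rcases le_or_gt ((1:ℝ) - p i) (t i) with h | h
  · left
    exact ⟨h1, fun hcu => absurd (mem_aBox.mp hcu i).2 (not_lt.mpr (hi h))⟩
  · right
    exact ⟨h2, fun hcp => absurd (mem_mkBox.mp hcp i).1 (not_le.mpr h)⟩

lemma measurableSet_mkBox (p q : Fin s → ℝ) : MeasurableSet (mkBox p q) :=
  MeasurableSet.univ_pi fun _ => measurableSet_Ico

lemma vol_mkBox (p q : Fin s → ℝ) :
    volume (mkBox p q) = ∏ i, ENNReal.ofReal (q i - p i) := by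
  rw [mkBox, volume_pi_pi]
  simp [Real.volume_Ico]

lemma vol_mkBox_ne_top (p q : Fin s → ℝ) : volume (mkBox p q) ≠ ⊤ := by
  rw [vol_mkBox]
  exact (ENNReal.prod_lt_top fun i _ => ENNReal.ofReal_lt_top).ne

lemma mkBox_inter (p q p' q' : Fin s → ℝ) :
    mkBox p q ∩ mkBox p' q' =
      mkBox (fun i => max (p i) (p' i)) (fun i => min (q i) (q' i)) := by
  unfold mkBox
  rw [← Set.pi_inter_distrib]
  simp only [Set.Ico_inter_Ico]

lemma vol_diff (p q p' q' : Fin s → ℝ) :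
    volume (mkBox p q \ mkBox p' q') =
      volume (mkBox p q) -
        volume (mkBox (fun i => max (p i) (p' i)) (fun i => min (q i) (q' i))) := by
  rw [← mkBox_inter]
  have h : mkBox p q \ mkBox p' q' = mkBox p q \ (mkBox p q ∩ mkBox p' q') :=
    (Set.diff_self_inter).symm
  rw [h, measure_diff Set.inter_subset_left
    ((measurableSet_mkBox _ _).inter (measurableSet_mkBox _ _)).nullMeasurableSet
    (by rw [mkBox_inter]; exact vol_mkBox_ne_top _ _)]

lemma one_sub_max (a b : ℝ) : 1 - max (1 - a) (1 - b) = min a b := by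
  rcases le_total a b with h | h
  · rw [min_eq_left h, max_eq_left (by linarith : 1 - b ≤ 1 - a)]; ring
  · rw [min_eq_right h, max_eq_right (by linarith : 1 - a ≤ 1 - b)]; ring

lemma vol_tail_eq (p q : Fin s → ℝ) :
    volume (mkBox (fun i => 1 - q i) 1 \ mkBox (fun i => 1 - p i) 1) =
      volume (aBox q \ aBox p) := by
  have ha : ∀ r : Fin s → ℝ, aBox r = mkBox 0 r := fun r => by
    unfold aBox mkBox; simp
  rw [ha q, ha p, vol_diff, vol_diff]
  congr 1
  · rw [vol_mkBox, vol_mkBox]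
    refine Finset.prod_congr rfl fun i _ => ?_
    simp only [Pi.one_apply, Pi.zero_apply]
    congr 1
    ring
  · rw [vol_mkBox, vol_mkBox]
    refine Finset.prod_congr rfl fun i _ => ?_
    simp only [Pi.one_apply, Pi.zero_apply]
    congr 1
    rw [min_self, max_self, one_sub_max]
    ring

lemma one_sub_mem {x : Fin s → ℝ} (hx : x ∈ Set.Icc (0 : Fin s → ℝ) 1) :
    (fun i => 1 - x i) ∈ Set.Icc (0 : Fin s → ℝ) 1 := by
  constructor
  · intro i
    have := hx.2 i
    simp only [Pi.one_apply, Pi.zero_apply] at *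
    linarith
  · intro i
    have := hx.1 i
    simp only [Pi.one_apply, Pi.zero_apply] at *
    linarith

/-- The key construction: from a `δ/2`-cover of the anchored boxes of cardinality `N`
we obtain a `δ`-cover of all boxes of cardinality at most `N ^ 2`. -/
lemma key (hs : 0 < s) {δ : ℝ} (hδ : 0 < δ) {Γ : Set (Set (Fin s → ℝ))}
    (hΓ : IsDeltaCover (δ / 2) (anchoredFamily s) Γ) :
    coverNum δ (boxFamily s) ≤ Γ.encard ^ 2 := by
  obtain ⟨hsub, hcov⟩ := hΓ
  set f : Set (Fin s → ℝ) × Set (Fin s → ℝ) → Set (Fin s → ℝ) :=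
    fun GH => mkBox (fun i => 1 - corner GH.2 i) (corner GH.1) with hf
  set Δ : Set (Set (Fin s → ℝ)) := f '' (Γ ×ˢ Γ) with hΔdef
  have hΔcover : IsDeltaCover δ (boxFamily s) Δ := by
    constructor
    · rintro _ ⟨⟨G, H⟩, _, rfl⟩
      exact mkBox_mem_boxFamily (one_sub_mem (corner_mem H)) (corner_mem G)
    · rintro A ⟨x, hx, y, hy, hxy, rfl⟩
      obtain ⟨Gu, hGu, Gv, hGv, hGuy, hyGv, hGvol⟩ := hcov (aBox y) (aBox_anchored hy)
      obtain ⟨Hu, hHu, Hv, hHv, hHux, hxHv, hHvol⟩ :=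
        hcov (aBox (fun i => 1 - x i)) (aBox_anchored (one_sub_mem hx))
      set u := corner Gu
      set v := corner Gv
      set p := corner Hu
      set q := corner Hv
      have hu1 : u ≤ 1 := (corner_mem Gu).2
      have hv1 : v ≤ 1 := (corner_mem Gv).2
      have hp1 : p ≤ 1 := (corner_mem Hu).2
      have hq1 : q ≤ 1 := (corner_mem Hv).2
      have hq0 : (0 : Fin s → ℝ) ≤ q := (corner_mem Hv).1
      refine ⟨mkBox (fun i => 1 - p i) u, ?_, mkBox (fun i => 1 - q i) v, ?_, ?_, ?_, ?_⟩
      · by_cases hmem : Gu ∈ Γ ∧ Hu ∈ Γ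
        · exact Or.inl ⟨(Gu, Hu), Set.mk_mem_prod hmem.1 hmem.2, rfl⟩
        · right
          rw [Set.mem_singleton_iff]
          refine mkBox_eq_empty hp1 hu1 ?_
          rcases not_and_or.mp hmem with h | h
          · exact Or.inr (aBox_corner_eq_empty hs (eq_empty_of_not_mem hGu h))
          · exact Or.inl (aBox_corner_eq_empty hs (eq_empty_of_not_mem hHu h))
      · by_cases hmem : Gv ∈ Γ ∧ Hv ∈ Γ
        · exact Or.inl ⟨(Gv, Hv), Set.mk_mem_prod hmem.1 hmem.2, rfl⟩
        · right
          rw [Set.mem_singleton_iff]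
          refine mkBox_eq_empty hq1 hv1 ?_
          rcases not_and_or.mp hmem with h | h
          · exact Or.inr (aBox_corner_eq_empty hs (eq_empty_of_not_mem hGv h))
          · exact Or.inl (aBox_corner_eq_empty hs (eq_empty_of_not_mem hHv h))
      · exact inner_sub hu1 hp1 hx.2 (corner_lower hGuy) (corner_lower hHux)
      · exact outer_sub hq0 hx.1 hy.2 (corner_upper hsub hGv hyGv) (corner_upper hsub hHv hxHv)
      · calc volume (mkBox (fun i => 1 - q i) v \ mkBox (fun i => 1 - p i) u)
            ≤ volume ((aBox v \ aBox u) ∪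
                (mkBox (fun i => 1 - q i) 1 \ mkBox (fun i => 1 - p i) 1)) :=
              measure_mono (diff_sub hq1 hv1)
          _ ≤ volume (aBox v \ aBox u) +
                volume (mkBox (fun i => 1 - q i) 1 \ mkBox (fun i => 1 - p i) 1) :=
              measure_union_le _ _
          _ ≤ ENNReal.ofReal (δ / 2) + ENNReal.ofReal (δ / 2) := by
              refine add_le_add (vol_corner_diff hsub hGu hGvol) ?_
              rw [vol_tail_eq]
              exact vol_corner_diff hsub hHu hHvol
          _ = ENNReal.ofReal δ := by
              rw [← ENNReal.ofReal_add (by linarith) (by linarith)]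
              norm_num
  have hsize : coverNum δ (boxFamily s) ≤ Δ.encard := sInf_le ⟨Δ, hΔcover, rfl⟩
  refine hsize.trans ?_
  by_cases hfin : Γ.Finite
  · have h1 : Δ.encard ≤ (Γ ×ˢ Γ).encard := Set.encard_image_le _ _
    have h2 : (Γ ×ˢ Γ).encard = Γ.encard * Γ.encard := by
      rw [(hfin.prod hfin).encard_eq_coe_toFinset_card, hfin.encard_eq_coe_toFinset_card,
        ← Set.Finite.toFinset_prod hfin hfin, Finset.card_product]
      push_cast
      ring
    rw [sq]
    exact h2 ▸ h1
  · have : Γ.encard = ⊤ := Set.Infinite.encard_eq hfin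
    rw [this]
    exact le_top.trans_eq (ENat.top_pow (by norm_num)).symm

end CoverAux

theorem coverNum_boxFamily_le (s : ℕ) (δ : ℝ) (hδ : 0 < δ) :
    coverNum δ (boxFamily s) ≤ coverNum (δ / 2) (anchoredFamily s) ^ 2 := by
  rcases Nat.eq_zero_or_pos s with hs | hs
  · subst hs
    have huniv : (Set.univ : Set (Fin 0 → ℝ)) =
        Set.pi Set.univ fun i : Fin 0 => Set.Ico ((0 : Fin 0 → ℝ) i) ((0 : Fin 0 → ℝ) i) := by
      symm
      rw [Set.eq_univ_iff_forall]
      intro t i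
      exact i.elim0
    have hbox : ∀ A ∈ boxFamily 0, A = Set.univ := by
      rintro A ⟨x, _, y, _, _, rfl⟩
      rw [Set.eq_univ_iff_forall]
      intro t i _
      exact i.elim0
    have h1 : coverNum δ (boxFamily 0) ≤ 1 := by
      apply sInf_le
      refine ⟨{Set.univ}, ⟨?_, ?_⟩, Set.encard_singleton _⟩
      · rw [Set.singleton_subset_iff]
        exact ⟨0, ⟨le_refl _, zero_le_one⟩, 0, ⟨le_refl _, zero_le_one⟩, le_refl _, huniv⟩
      · intro A hA
        have hA' := hbox A hA
        subst hA'
        refine ⟨Set.univ, Or.inl rfl, Set.univ, Or.inl rfl, le_refl _, le_refl _, ?_⟩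
        simp
    have h2 : (1 : ℕ∞) ≤ coverNum (δ / 2) (anchoredFamily 0) := by
      apply le_sInf
      rintro n ⟨Γ, ⟨hsub, hcov⟩, rfl⟩
      rw [Set.one_le_encard_iff_nonempty]
      have hmem : (Set.univ : Set (Fin 0 → ℝ)) ∈ anchoredFamily 0 :=
        ⟨0, ⟨le_refl _, zero_le_one⟩, huniv⟩
      obtain ⟨U, _, V, hV, _, hUV, _⟩ := hcov Set.univ hmem
      rcases hV with hV | hV
      · exact ⟨V, hV⟩
      · rw [Set.mem_singleton_iff] at hV
        subst hV
        exact absurd (hUV (Set.mem_univ (fun i => i.elim0))) (Set.notMem_empty _)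
    calc coverNum δ (boxFamily 0) ≤ 1 := h1
      _ = 1 ^ 2 := (one_pow 2).symm
      _ ≤ coverNum (δ / 2) (anchoredFamily 0) ^ 2 := pow_le_pow_left₀ (zero_le_one) h2 2
  · set S := {n : ℕ∞ | ∃ Γ, IsDeltaCover (δ / 2) (anchoredFamily s) Γ ∧ Γ.encard = n} with hS_def
    rcases S.eq_empty_or_nonempty with hS | hS
    · have hT : coverNum (δ / 2) (anchoredFamily s) = ⊤ := by
        rw [coverNum, ← hS_def, hS, sInf_empty]
      rw [hT]
      exact le_top.trans_eq (ENat.top_pow (by norm_num)).symm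
    · obtain ⟨Γ, hΓ, hcard⟩ := csInf_mem hS
      calc coverNum δ (boxFamily s) ≤ Γ.encard ^ 2 := CoverAux.key hs hδ hΓ
        _ = coverNum (δ / 2) (anchoredFamily s) ^ 2 := by rw [hcard]; rfl
end

section
/- For every δ > 0 and every dimension s, the minimal size of a δ-bracketing cover for R^s satisfies N_{[]}(δ, R^s) ≤ N_{[]}(δ/2, C^s)^2. -/
open MeasureTheory Set


open MeasureTheory Set

namespace BracketAux

variable {s : ℕ}

def Box {s : ℕ} (x y : Fin s → ℝ) : Set (Fin s → ℝ) :=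
  Set.pi Set.univ fun i => Set.Ico (x i) (y i)

lemma mem_Box {x y z : Fin s → ℝ} : z ∈ Box x y ↔ ∀ i, x i ≤ z i ∧ z i < y i := by
  simp [Box, Set.mem_pi, Set.mem_Ico]

lemma Box_measurable (x y : Fin s → ℝ) : MeasurableSet (Box x y) :=
  MeasurableSet.univ_pi fun _ => measurableSet_Ico

lemma volume_Box (x y : Fin s → ℝ) :
    volume (Box x y) = ∏ i, ENNReal.ofReal (y i - x i) := by
  rw [Box, volume_pi_pi]
  simp [Real.volume_Ico]

lemma le_of_Box_subset {v w : Fin s → ℝ} (hw : 0 ≤ w) (hpos : ∀ i, 0 < v i)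
    (h : Box 0 v ⊆ Box 0 w) : v ≤ w := by
  intro i
  by_contra hlt
  push_neg at hlt
  have hz : (fun j => if j = i then w i else v j / 2) ∈ Box 0 v := by
    rw [mem_Box]
    intro j
    by_cases hj : j = i
    · subst hj; simp only [if_pos rfl, Pi.zero_apply]
      exact ⟨hw j, hlt⟩
    · simp only [if_neg hj, Pi.zero_apply]
      exact ⟨by linarith [hpos j], by linarith [hpos j]⟩
  have hz2 := h hz
  rw [mem_Box] at hz2
  have := (hz2 i).2
  simp only [if_pos rfl] at this
  exact lt_irrefl _ this

/-- The members of a box-bracket pair. Elimination of the `⊔`. -/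
lemma mem_clamped {p v z : Fin s → ℝ} (hz : z ∈ Box p (p ⊔ v)) :
    ∀ i, p i ≤ z i ∧ z i < v i := by
  rw [mem_Box] at hz
  intro i
  obtain ⟨h1, h2⟩ := hz i
  rcases le_or_gt (v i) (p i) with h | h
  · exact absurd (h2.trans_le (by simpa [Pi.sup_apply] using sup_le le_rfl h)) (not_lt.2 h1)
  · refine ⟨h1, ?_⟩
    have : (p ⊔ v) i = v i := by simp [Pi.sup_apply, sup_eq_right.2 h.le]
    rwa [this] at h2

lemma bnd {v : Fin s → ℝ} (h : v ∈ Icc (0 : Fin s → ℝ) 1) (i : Fin s) :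
    0 ≤ v i ∧ v i ≤ 1 := ⟨h.1 i, h.2 i⟩

lemma pair_core {δ : ℝ} (hδ : 0 ≤ δ) {v w a b : Fin s → ℝ}
    (hv : v ∈ Icc (0 : Fin s → ℝ) 1) (hw : w ∈ Icc (0 : Fin s → ℝ) 1)
    (ha : a ∈ Icc (0 : Fin s → ℝ) 1) (hb : b ∈ Icc (0 : Fin s → ℝ) 1)
    (hvw : v ≤ w) (hab : a ≤ b)
    (h1 : volume (Box 0 w \ Box 0 v) ≤ ENNReal.ofReal (δ / 2))
    (h2 : volume (Box 0 b \ Box 0 a) ≤ ENNReal.ofReal (δ / 2)) :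
    Box (1 - a) ((1 - a) ⊔ v) ⊆ Box (1 - b) ((1 - b) ⊔ w) ∧
      volume (Box (1 - b) ((1 - b) ⊔ w) \ Box (1 - a) ((1 - a) ⊔ v)) ≤ ENNReal.ofReal δ := by
  have hba : (1 : Fin s → ℝ) - b ≤ 1 - a := fun i => by
    simp only [Pi.sub_apply, Pi.one_apply]; linarith [hab i]
  constructor
  · intro z hz
    have key := mem_clamped hz
    rw [mem_Box]
    intro i
    refine ⟨(hba i).trans (key i).1, ?_⟩
    calc z i < v i := (key i).2
      _ ≤ w i := hvw i
      _ ≤ ((1 - b) ⊔ w) i := by simp [Pi.sup_apply]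
  · -- volume estimate
    set S2 : Set (Fin s → ℝ) :=
      (Set.pi Set.univ fun i => Set.Icc ((1 - b) i) 1) \
        (Set.pi Set.univ fun i => Set.Ioc ((1 - a) i) 1) with hS2
    have hsubset : Box (1 - b) ((1 - b) ⊔ w) \ Box (1 - a) ((1 - a) ⊔ v) ⊆
        (Box 0 w \ Box 0 v) ∪ S2 := by
      rintro z ⟨hzV, hzU⟩
      have keyV := mem_clamped hzV
      by_cases hcase : ∀ i, z i < v i
      · right
        rw [mem_Box, not_forall] at hzU
        obtain ⟨i, hi⟩ := hzU
        rw [not_and_or, not_le, not_lt] at hi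
        have hzi : z i < (1 - a) i := by
          rcases hi with h | h
          · exact h
          · exfalso
            have hv' : z i < ((1 - a) ⊔ v) i := by
              refine (hcase i).trans_le ?_
              simp [Pi.sup_apply]
            exact absurd hv' (not_lt.2 h)
        refine ⟨?_, ?_⟩
        · rw [Set.mem_univ_pi]
          intro j
          exact ⟨(keyV j).1, ((keyV j).2.trans_le (bnd hw j).2).le⟩
        · rw [Set.mem_univ_pi, not_forall]
          exact ⟨i, by simp only [Set.mem_Ioc, not_and_or, not_lt]; left; exact hzi.le⟩
      · left
        push_neg at hcase
        obtain ⟨i, hi⟩ := hcase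
        constructor
        · rw [mem_Box]
          intro j
          refine ⟨?_, (keyV j).2⟩
          have : 0 ≤ (1 - b) j := by
            simp only [Pi.sub_apply, Pi.one_apply]; linarith [(bnd hb j).2]
          exact this.trans (keyV j).1
        · rw [mem_Box, not_forall]
          exact ⟨i, by simp only [Pi.zero_apply, not_and_or, not_lt]; right; exact hi⟩
    have hS2vol : volume S2 ≤ ENNReal.ofReal (δ / 2) := by
      have hsub' : (Set.pi Set.univ fun i => Set.Ioc ((1 - a) i) 1) ⊆
          (Set.pi Set.univ fun i => Set.Icc ((1 - b) i) 1) :=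
        Set.pi_mono fun i _ => fun t ht => ⟨(hba i).trans ht.1.le, ht.2⟩
      have hIoc_meas : MeasurableSet (Set.pi Set.univ fun i => Set.Ioc ((1 - a) i) 1) :=
        MeasurableSet.univ_pi fun _ => measurableSet_Ioc
      have hIoc_fin : volume (Set.pi Set.univ fun i => Set.Ioc ((1 - a) i) 1) ≠ ⊤ := by
        rw [volume_pi_pi]
        exact ENNReal.prod_ne_top fun i _ => by simp [Real.volume_Ioc]
      have hvol : volume S2 =
          volume (Set.pi Set.univ fun i => Set.Icc ((1 - b) i) 1) -
            volume (Set.pi Set.univ fun i => Set.Ioc ((1 - a) i) 1) :=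
        measure_diff hsub' hIoc_meas.nullMeasurableSet hIoc_fin
      have e1 : volume (Set.pi Set.univ fun i => Set.Icc ((1 - b) i) 1) =
          ∏ i, ENNReal.ofReal (b i) := by
        rw [volume_pi_pi]
        congr 1
        funext i
        rw [Real.volume_Icc]
        congr 1
        simp only [Pi.sub_apply, Pi.one_apply]
        ring
      have e2 : volume (Set.pi Set.univ fun i => Set.Ioc ((1 - a) i) 1) =
          ∏ i, ENNReal.ofReal (a i) := by
        rw [volume_pi_pi]
        congr 1
        funext i
        rw [Real.volume_Ioc]
        congr 1
        simp only [Pi.sub_apply, Pi.one_apply]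
        ring
      have e3 : volume (Box 0 b \ Box 0 a) =
          ∏ i, ENNReal.ofReal (b i) - ∏ i, ENNReal.ofReal (a i) := by
        have hab' : Box 0 a ⊆ Box 0 b := by
          apply Set.pi_mono
          intro i _
          exact Set.Ico_subset_Ico le_rfl (hab i)
        have hfin : volume (Box 0 a) ≠ ⊤ := by
          rw [volume_Box]
          exact ENNReal.prod_ne_top fun i _ => ENNReal.ofReal_ne_top
        rw [measure_diff hab' (Box_measurable 0 a).nullMeasurableSet hfin,
          volume_Box, volume_Box]
        simp
      rw [hvol, e1, e2, ← e3]
      exact h2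
    calc volume (Box (1 - b) ((1 - b) ⊔ w) \ Box (1 - a) ((1 - a) ⊔ v))
        ≤ volume ((Box 0 w \ Box 0 v) ∪ S2) := measure_mono hsubset
      _ ≤ volume (Box 0 w \ Box 0 v) + volume S2 := measure_union_le _ _
      _ ≤ ENNReal.ofReal (δ / 2) + ENNReal.ofReal (δ / 2) := add_le_add h1 hS2vol
      _ = ENNReal.ofReal δ := by
          rw [← ENNReal.ofReal_add (by linarith) (by linarith)]
          norm_num

lemma cover_core {x y v w a b : Fin s → ℝ}
    (hx : x ∈ Icc (0 : Fin s → ℝ) 1) (hy : y ∈ Icc (0 : Fin s → ℝ) 1)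
    (hv : v ∈ Icc (0 : Fin s → ℝ) 1) (hw : w ∈ Icc (0 : Fin s → ℝ) 1)
    (ha : a ∈ Icc (0 : Fin s → ℝ) 1) (hb : b ∈ Icc (0 : Fin s → ℝ) 1)
    (h1 : Box 0 v ⊆ Box 0 y) (h2 : Box 0 y ⊆ Box 0 w)
    (h3 : Box 0 a ⊆ Box 0 (1 - x)) (h4 : Box 0 (1 - x) ⊆ Box 0 b) :
    Box (1 - a) ((1 - a) ⊔ v) ⊆ Box x y ∧ Box x y ⊆ Box (1 - b) ((1 - b) ⊔ w) := by
  constructor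
  · intro z hz
    have key := mem_clamped hz
    have hapos : ∀ i, 0 < a i := by
      intro i
      have h5 := (key i).1
      have h6 := (key i).2
      simp only [Pi.sub_apply, Pi.one_apply] at h5
      have hv1 := (bnd hv i).2
      linarith
    have hvpos : ∀ i, 0 < v i := by
      intro i
      have h5 := (key i).1
      have h6 := (key i).2
      have ha1 := (bnd ha i).2
      simp only [Pi.sub_apply, Pi.one_apply] at h5
      linarith
    have hax : a ≤ 1 - x :=
      le_of_Box_subset (fun i => by
        simp only [Pi.sub_apply, Pi.one_apply, Pi.zero_apply]
        linarith [(bnd hx i).2]) hapos h3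
    have hvy : v ≤ y := le_of_Box_subset (fun i => (bnd hy i).1) hvpos h1
    rw [mem_Box]
    intro i
    have h5 := (key i).1
    have h6 := (key i).2
    have := hax i
    simp only [Pi.sub_apply, Pi.one_apply] at h5 this ⊢
    exact ⟨by linarith, h6.trans_le (hvy i)⟩
  · intro z hz
    rw [mem_Box] at hz
    by_cases hne : ∀ i, x i < y i
    · have hypos : ∀ i, 0 < y i := fun i => (hx.1 i).trans_lt (hne i)
      have hxpos : ∀ i, 0 < (1 - x : Fin s → ℝ) i := by
        intro i
        simp only [Pi.sub_apply, Pi.one_apply]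
        linarith [(hne i).trans_le ((bnd hy i).2)]
      have hyw : y ≤ w := le_of_Box_subset (fun i => (bnd hw i).1) hypos h2
      have hxb : (1 : Fin s → ℝ) - x ≤ b :=
        le_of_Box_subset (fun i => (bnd hb i).1) hxpos h4
      rw [mem_Box]
      intro i
      have h5 := (hz i).1
      have h6 := (hz i).2
      have h7 := hxb i
      simp only [Pi.sub_apply, Pi.one_apply] at h7 ⊢
      refine ⟨by linarith, ?_⟩
      calc z i < y i := h6
        _ ≤ w i := hyw i
        _ ≤ max (1 - b i) (w i) := le_max_right _ _
    · push_neg at hne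
      obtain ⟨i, hi⟩ := hne
      exact absurd ((hz i).1.trans_lt (hz i).2) (not_lt.2 hi)

lemma anchored_rep {A B : Set (Fin s → ℝ)} (hA : A ∈ anchoredFamily s)
    (hB : B ∈ anchoredFamily s) (hAB : A ⊆ B) :
    ∃ v w : Fin s → ℝ, v ∈ Icc 0 1 ∧ w ∈ Icc 0 1 ∧ v ≤ w ∧ A = Box 0 v ∧ B = Box 0 w := by
  obtain ⟨v0, hv0, rfl⟩ := hA
  obtain ⟨w, hw, rfl⟩ := hB
  have hrepA : (Set.pi Set.univ fun i => Set.Ico 0 (v0 i)) = Box 0 v0 := rfl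
  have hrepB : (Set.pi Set.univ fun i => Set.Ico 0 (w i)) = Box 0 w := rfl
  by_cases hpos : ∀ i, 0 < v0 i
  · exact ⟨v0, w, hv0, hw, le_of_Box_subset hw.1 hpos hAB, rfl, rfl⟩
  · push_neg at hpos
    obtain ⟨i0, hi0⟩ := hpos
    refine ⟨fun i => min (v0 i) (w i), w, ⟨fun i => le_min (hv0.1 i) (hw.1 i),
      fun i => (min_le_left _ _).trans (hv0.2 i)⟩, hw, fun i => min_le_right _ _, ?_, rfl⟩
    have h1 : (Set.pi Set.univ fun i => Set.Ico 0 (v0 i)) = (∅ : Set (Fin s → ℝ)) :=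
      Set.univ_pi_eq_empty (i := i0) (Set.Ico_eq_empty (by simpa using hi0))
    have h2 : Box 0 (fun i => min (v0 i) (w i)) = (∅ : Set (Fin s → ℝ)) :=
      Set.univ_pi_eq_empty (i := i0) (Set.Ico_eq_empty (by
        simp only [Pi.zero_apply, not_lt]
        exact min_le_of_left_le hi0))
    rw [h1, h2]

/-- A canonical representative pair of corners for a pair of anchored sets. -/
noncomputable def repPair (P : Set (Fin s → ℝ) × Set (Fin s → ℝ)) :
    (Fin s → ℝ) × (Fin s → ℝ) :=
  haveI := Classical.propDecidable
  if h : ∃ p : (Fin s → ℝ) × (Fin s → ℝ), p.1 ∈ Icc 0 1 ∧ p.2 ∈ Icc 0 1 ∧ p.1 ≤ p.2 ∧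
      P.1 = Box 0 p.1 ∧ P.2 = Box 0 p.2
  then h.choose else (0, 0)

lemma repPair_spec {P : Set (Fin s → ℝ) × Set (Fin s → ℝ)}
    (h1 : P.1 ∈ anchoredFamily s) (h2 : P.2 ∈ anchoredFamily s) (h12 : P.1 ⊆ P.2) :
    (repPair P).1 ∈ Icc (0 : Fin s → ℝ) 1 ∧ (repPair P).2 ∈ Icc (0 : Fin s → ℝ) 1 ∧
      (repPair P).1 ≤ (repPair P).2 ∧ P.1 = Box 0 (repPair P).1 ∧ P.2 = Box 0 (repPair P).2 := by
  have hex : ∃ p : (Fin s → ℝ) × (Fin s → ℝ), p.1 ∈ Icc 0 1 ∧ p.2 ∈ Icc 0 1 ∧ p.1 ≤ p.2 ∧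
      P.1 = Box 0 p.1 ∧ P.2 = Box 0 p.2 := by
    obtain ⟨v, w, hv, hw, hvw, hAv, hBw⟩ := anchored_rep h1 h2 h12
    exact ⟨(v, w), hv, hw, hvw, hAv, hBw⟩
  unfold repPair
  rw [dif_pos hex]
  exact hex.choose_spec

/-- The bracket for boxes built from a bracket `P` (for the upper corner) and a
bracket `Q` (for the reflected lower corner). -/
noncomputable def bPair (P Q : Set (Fin s → ℝ) × Set (Fin s → ℝ)) :
    Set (Fin s → ℝ) × Set (Fin s → ℝ) :=
  (Box (1 - (repPair Q).1) ((1 - (repPair Q).1) ⊔ (repPair P).1),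
   Box (1 - (repPair Q).2) ((1 - (repPair Q).2) ⊔ (repPair P).2))

lemma Box_mem_boxFamily {x y : Fin s → ℝ} (hx : x ∈ Icc (0 : Fin s → ℝ) 1)
    (hy : y ∈ Icc (0 : Fin s → ℝ) 1) (hxy : x ≤ y) : Box x y ∈ boxFamily s :=
  ⟨x, hx, y, hy, hxy, rfl⟩

lemma one_sub_mem {a : Fin s → ℝ} (ha : a ∈ Icc (0 : Fin s → ℝ) 1) :
    (1 : Fin s → ℝ) - a ∈ Icc (0 : Fin s → ℝ) 1 := by
  constructor
  · intro i
    simp only [Pi.sub_apply, Pi.one_apply, Pi.zero_apply]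
    linarith [(bnd ha i).2]
  · intro i
    simp only [Pi.sub_apply, Pi.one_apply]
    linarith [(bnd ha i).1]

lemma sup_mem {p v : Fin s → ℝ} (hp : p ∈ Icc (0 : Fin s → ℝ) 1)
    (hv : v ∈ Icc (0 : Fin s → ℝ) 1) : p ⊔ v ∈ Icc (0 : Fin s → ℝ) 1 := by
  constructor
  · intro i
    simp only [Pi.sup_apply]
    exact le_sup_of_le_left (hp.1 i)
  · intro i
    simp only [Pi.sup_apply]
    exact sup_le (hp.2 i) (hv.2 i)

lemma main_construct {δ : ℝ} (hδ : 0 ≤ δ) {Δ : Set (Set (Fin s → ℝ) × Set (Fin s → ℝ))}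
    (hΔ : IsBracketingCover (δ / 2) (anchoredFamily s) Δ) :
    IsBracketingCover δ (boxFamily s) ((fun PQ => bPair PQ.1 PQ.2) '' (Δ ×ˢ Δ)) := by
  obtain ⟨hsub, hpair, hcov⟩ := hΔ
  have hspec : ∀ P ∈ Δ, (repPair P).1 ∈ Icc (0 : Fin s → ℝ) 1 ∧
      (repPair P).2 ∈ Icc (0 : Fin s → ℝ) 1 ∧ (repPair P).1 ≤ (repPair P).2 ∧
      P.1 = Box 0 (repPair P).1 ∧ P.2 = Box 0 (repPair P).2 := by
    intro P hP
    have hm := hsub hP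
    rw [Set.mem_prod] at hm
    exact repPair_spec hm.1 hm.2 (hpair P hP).1
  refine ⟨?_, ?_, ?_⟩
  · rintro _ ⟨⟨P, Q⟩, hPQ, rfl⟩
    rw [Set.mem_prod] at hPQ ⊢
    obtain ⟨hvP, hwP, hvwP, _, _⟩ := hspec P hPQ.1
    obtain ⟨haQ, hbQ, habQ, _, _⟩ := hspec Q hPQ.2
    constructor
    · exact Box_mem_boxFamily (one_sub_mem haQ) (sup_mem (one_sub_mem haQ) hvP) le_sup_left
    · exact Box_mem_boxFamily (one_sub_mem hbQ) (sup_mem (one_sub_mem hbQ) hwP) le_sup_left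
  · rintro _ ⟨⟨P, Q⟩, hPQ, rfl⟩
    rw [Set.mem_prod] at hPQ
    obtain ⟨hvP, hwP, hvwP, hP1, hP2⟩ := hspec P hPQ.1
    obtain ⟨haQ, hbQ, habQ, hQ1, hQ2⟩ := hspec Q hPQ.2
    have hvolP := (hpair P hPQ.1).2
    have hvolQ := (hpair Q hPQ.2).2
    rw [hP1, hP2] at hvolP
    rw [hQ1, hQ2] at hvolQ
    exact pair_core hδ hvP hwP haQ hbQ hvwP habQ hvolP hvolQ
  · intro A hA
    obtain ⟨x, hx, y, hy, hxy, rfl⟩ := hA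
    have hAy : (Set.pi Set.univ fun i => Set.Ico 0 (y i)) ∈ anchoredFamily s := ⟨y, hy, rfl⟩
    have hAx : (Set.pi Set.univ fun i => Set.Ico 0 (((1 : Fin s → ℝ) - x) i)) ∈
        anchoredFamily s := ⟨1 - x, one_sub_mem hx, rfl⟩
    obtain ⟨P, hP, hP1, hP2⟩ := hcov _ hAy
    obtain ⟨Q, hQ, hQ1, hQ2⟩ := hcov _ hAx
    obtain ⟨hvP, hwP, hvwP, hPe1, hPe2⟩ := hspec P hP
    obtain ⟨haQ, hbQ, habQ, hQe1, hQe2⟩ := hspec Q hQ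
    have hyBox : (Set.pi Set.univ fun i => Set.Ico 0 (y i)) = Box 0 y := rfl
    have hxBox : (Set.pi Set.univ fun i => Set.Ico 0 (((1 : Fin s → ℝ) - x) i)) =
        Box 0 (1 - x) := rfl
    rw [hPe1, hyBox] at hP1
    rw [hyBox, hPe2] at hP2
    rw [hQe1, hxBox] at hQ1
    rw [hxBox, hQe2] at hQ2
    have hcc := cover_core hx hy hvP hwP haQ hbQ hP1 hP2 hQ1 hQ2
    exact ⟨bPair P Q, ⟨(P, Q), Set.mem_prod.2 ⟨hP, hQ⟩, rfl⟩, hcc.1, hcc.2⟩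

lemma encard_prod {α β : Type*} (s : Set α) (t : Set β) :
    (s ×ˢ t).encard = s.encard * t.encard := by
  simp only [Set.encard, ENat.card]
  rw [Cardinal.mk_congr (Equiv.Set.prod s t), Cardinal.mk_prod, map_mul,
    Cardinal.toENat_lift, Cardinal.toENat_lift]

end BracketAux

theorem bracketNum_boxFamily_le (s : ℕ) (δ : ℝ) (hδ : 0 < δ) :
    bracketNum δ (boxFamily s) ≤ bracketNum (δ / 2) (anchoredFamily s) ^ 2 := by
  set N := bracketNum (δ / 2) (anchoredFamily s) with hN
  rcases eq_or_ne N ⊤ with htop | hne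
  · rw [htop]
    simp [pow_two]
  · have hlt : N < N + 1 := (ENat.lt_add_one_iff hne).2 le_rfl
    rw [hN, bracketNum] at hlt
    obtain ⟨m, ⟨Δ, hΔ, hm⟩, hmlt⟩ := sInf_lt_iff.1 (by exact hlt)
    have hmN : m ≤ N := (ENat.lt_add_one_iff hne).1 hmlt
    have hcov := BracketAux.main_construct hδ.le hΔ
    calc bracketNum δ (boxFamily s)
        ≤ ((fun PQ => BracketAux.bPair PQ.1 PQ.2) '' (Δ ×ˢ Δ)).encard :=
          sInf_le ⟨_, hcov, rfl⟩
      _ ≤ (Δ ×ˢ Δ).encard := Set.encard_image_le _ _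
      _ = Δ.encard * Δ.encard := BracketAux.encard_prod Δ Δ
      _ ≤ N * N := by
          rw [hm]
          exact mul_le_mul' hmN hmN
      _ = N ^ 2 := (sq N).symm
end

section
/- Let X_1,...,X_n be independent real random variables with E[X_k] = 0, |X_k| ≤ M < ∞ almost surely, and Var(X_k) = σ_k^2 < ∞ for all k. Then for every t > 0, P( max_{1≤k≤n} |∑_{i=1}^k X_i| > t ) ≤ 2·exp( −t² / (2∑_{k=1}^n σ_k² + (2/3)·M·t) ). -/
set_option maxHeartbeats 1000000

open MeasureTheory ProbabilityTheory Finset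

lemma mbiFact (n : ℕ) : 2 * 3 ^ n ≤ (n + 2).factorial := by
  induction n with
  | zero => simp [Nat.factorial]
  | succ n ih =>
    calc 2 * 3 ^ (n + 1) = 3 * (2 * 3 ^ n) := by ring
    _ ≤ 3 * (n + 2).factorial := Nat.mul_le_mul_left 3 ih
    _ ≤ (n + 3) * (n + 2).factorial := Nat.mul_le_mul_right _ (by omega)
    _ = (n + 3).factorial := rfl

lemma mbiExpBound {c u : ℝ} (hc0 : 0 ≤ c) (hc3 : c < 3) (hu : |u| ≤ c) :
    Real.exp u ≤ 1 + u + u ^ 2 / (2 * (1 - c / 3)) := by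
  have hsum0 : Summable (fun n : ℕ => u ^ n / n.factorial) :=
    Real.summable_pow_div_factorial u
  have hexp : Real.exp u = ∑' n : ℕ, u ^ n / n.factorial := by
    rw [Real.exp_eq_exp_ℝ, NormedSpace.exp_eq_tsum_div]
  have hsum1 : Summable (fun n : ℕ => u ^ (n + 1) / (n + 1).factorial) :=
    (summable_nat_add_iff 1).2 hsum0
  have hsum2 : Summable (fun n : ℕ => u ^ (n + 2) / (n + 2).factorial) :=
    (summable_nat_add_iff 2).2 hsum0
  have h13 : c / 3 < 1 := by linarith
  have hgeom : Summable (fun n : ℕ => u ^ 2 / 2 * (c / 3) ^ n) :=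
    (summable_geometric_of_lt_one (by positivity) h13).mul_left _
  have hterm : ∀ n : ℕ, u ^ (n + 2) / (n + 2).factorial ≤ u ^ 2 / 2 * (c / 3) ^ n := by
    intro n
    have h1 : u ^ (n + 2) ≤ u ^ 2 * c ^ n := by
      calc u ^ (n + 2) ≤ |u ^ (n + 2)| := le_abs_self _
      _ = |u| ^ 2 * |u| ^ n := by rw [abs_pow, pow_add, mul_comm]
      _ ≤ u ^ 2 * c ^ n := by
          rw [sq_abs]
          exact mul_le_mul_of_nonneg_left (pow_le_pow_left₀ (abs_nonneg _) hu n) (sq_nonneg _)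
    have h2 : (2 * 3 ^ n : ℝ) ≤ (n + 2).factorial := by
      exact_mod_cast Nat.cast_le.2 (mbiFact n)
    calc u ^ (n + 2) / (n + 2).factorial ≤ (u ^ 2 * c ^ n) / (2 * 3 ^ n) :=
          div_le_div₀ (by positivity) h1 (by positivity) h2
    _ = u ^ 2 / 2 * (c / 3) ^ n := by rw [div_pow]; ring
  have htail : ∑' n : ℕ, u ^ (n + 2) / (n + 2).factorial ≤ u ^ 2 / (2 * (1 - c / 3)) := by
    calc ∑' n : ℕ, u ^ (n + 2) / (n + 2).factorial
        ≤ ∑' n : ℕ, u ^ 2 / 2 * (c / 3) ^ n := Summable.tsum_le_tsum hterm hsum2 hgeom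
    _ = u ^ 2 / 2 * (1 - c / 3)⁻¹ := by
        rw [tsum_mul_left, tsum_geometric_of_lt_one (by positivity) h13]
    _ = u ^ 2 / (2 * (1 - c / 3)) := by
        field_simp
  have hsplit : Real.exp u = 1 + u + ∑' n : ℕ, u ^ (n + 2) / (n + 2).factorial := by
    rw [hexp, Summable.tsum_eq_zero_add hsum0]
    simp only [pow_zero, Nat.factorial_zero, Nat.cast_one, div_one]
    rw [Summable.tsum_eq_zero_add hsum1]
    norm_num
    rw [add_assoc]
  rw [hsplit]
  linarith [htail]
lemma mbiMgf {Ω : Type*} [MeasurableSpace Ω] {μ : Measure Ω} [IsProbabilityMeasure μ]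
    {X : Ω → ℝ} (hX : Measurable X) {M l : ℝ} (hl : 0 ≤ l) (hM0 : 0 ≤ M)
    (hM : ∀ᵐ ω ∂μ, |X ω| ≤ M) (hmean : μ[X] = 0) (hc : l * M < 3) :
    ∫ ω, Real.exp (l * X ω) ∂μ ≤
      Real.exp (l ^ 2 * variance X μ / (2 * (1 - l * M / 3))) := by
  have hlM : 0 ≤ l * M := mul_nonneg hl hM0
  have hXint : Integrable X μ :=
    (integrable_const M).mono' hX.aestronglyMeasurable
      (by filter_upwards [hM] with ω h using by simpa [Real.norm_eq_abs] using h)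
  have hX2 : MemLp X 2 μ :=
    (memLp_top_of_bound hX.aestronglyMeasurable M
      (by filter_upwards [hM] with ω h using by simpa [Real.norm_eq_abs] using h)).mono_exponent le_top
  have hX2int : Integrable (fun ω => X ω ^ 2) μ := by
    simpa using hX2.integrable_sq
  have hvar : ∫ ω, X ω ^ 2 ∂μ = variance X μ := by
    rw [variance_eq_sub hX2, hmean]
    simp [Pi.pow_apply]
  have hptwise : ∀ᵐ ω ∂μ, Real.exp (l * X ω) ≤
      1 + l * X ω + (l * X ω) ^ 2 / (2 * (1 - l * M / 3)) := by
    filter_upwards [hM] with ω h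
    exact mbiExpBound hlM hc (by rw [abs_mul, abs_of_nonneg hl]; exact mul_le_mul_of_nonneg_left h hl)
  have hintR : Integrable (fun ω => 1 + l * X ω + (l * X ω) ^ 2 / (2 * (1 - l * M / 3))) μ := by
    refine (((integrable_const 1).add (hXint.const_mul l)).add ?_)
    have : (fun ω => (l * X ω) ^ 2 / (2 * (1 - l * M / 3)))
        = fun ω => (l ^ 2 / (2 * (1 - l * M / 3))) * X ω ^ 2 := by
      funext ω; ring
    rw [this]
    exact hX2int.const_mul _
  have hintL : Integrable (fun ω => Real.exp (l * X ω)) μ := by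
    refine (integrable_const (Real.exp (l * M))).mono'
      ((hX.const_mul l).exp.aestronglyMeasurable) ?_
    filter_upwards [hM] with ω h
    rw [Real.norm_eq_abs, abs_of_pos (Real.exp_pos _), Real.exp_le_exp]
    exact mul_le_mul_of_nonneg_left (le_trans (le_abs_self _) h) hl
  calc ∫ ω, Real.exp (l * X ω) ∂μ
      ≤ ∫ ω, (1 + l * X ω + (l * X ω) ^ 2 / (2 * (1 - l * M / 3))) ∂μ :=
        integral_mono_ae hintL hintR hptwise
    _ = 1 + l ^ 2 * variance X μ / (2 * (1 - l * M / 3)) := by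
        have e3 : (fun ω => (l * X ω) ^ 2 / (2 * (1 - l * M / 3)))
            = fun ω => (l ^ 2 / (2 * (1 - l * M / 3))) * X ω ^ 2 := by
          funext ω; ring
        have I1 : Integrable (fun ω => (1 : ℝ) + l * X ω) μ :=
          (integrable_const 1).add (hXint.const_mul l)
        have I2 : Integrable (fun ω => (l * X ω) ^ 2 / (2 * (1 - l * M / 3))) μ := by
          rw [e3]; exact hX2int.const_mul _
        have I0 : Integrable (fun ω => l * X ω) μ := hXint.const_mul l
        rw [integral_add I1 I2, integral_add (integrable_const 1) I0,
          integral_const, integral_const_mul, hmean, e3, integral_const_mul, hvar]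
        simp
        ring
    _ ≤ Real.exp (l ^ 2 * variance X μ / (2 * (1 - l * M / 3))) := by
        rw [add_comm]
        exact Real.add_one_le_exp _
lemma mbiOneSided {Ω : Type*} [MeasurableSpace Ω] {μ : Measure Ω} [IsProbabilityMeasure μ]
    {n : ℕ} (X : Fin (n + 1) → Ω → ℝ) (hmeas : ∀ k, Measurable (X k))
    (hindep : iIndepFun X μ)
    {M : ℝ} (hM0 : 0 ≤ M) (hM : ∀ k, ∀ᵐ ω ∂μ, |X k ω| ≤ M)
    (hmean : ∀ k, μ[X k] = 0)
    {t l : ℝ} (ht : 0 < t) (hl : 0 ≤ l) :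
    (μ {ω | ∃ k, t < ∑ i ∈ Finset.Iic k, X i ω}).toReal ≤
      Real.exp (-(l * t)) * ∫ ω, Real.exp (l * ∑ i, X i ω) ∂μ := by
  classical
  set S : Fin (n + 1) → Ω → ℝ := fun k ω => ∑ i ∈ Finset.Iic k, X i ω with hS
  have hSmeas : ∀ k, Measurable (S k) := fun k =>
    Finset.measurable_sum _ (fun i _ => hmeas i)
  set A : Fin (n + 1) → Set Ω :=
    fun k => {ω | t < S k ω ∧ ∀ j, j < k → S j ω ≤ t} with hA
  have hAmeas : ∀ k, MeasurableSet (A k) := by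
    intro k
    have : A k = {ω | t < S k ω} ∩ ⋂ j, {ω | j < k → S j ω ≤ t} := by
      ext ω; simp [hA, Set.mem_iInter]
    rw [this]
    refine (measurableSet_lt measurable_const (hSmeas k)).inter (MeasurableSet.iInter fun j => ?_)
    by_cases hj : j < k
    · simp only [hj, forall_true_left]
      exact measurableSet_le (hSmeas j) measurable_const
    · simp [hj]
  have hbd : ∀ᵐ ω ∂μ, ∀ k, |X k ω| ≤ M := (ae_all_iff).2 hM
  -- boundedness of exponentials of partial sums
  have hsumbd : ∀ (s : Finset (Fin (n + 1))) (ω : Ω), (∀ k, |X k ω| ≤ M) →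
      |∑ i ∈ s, X i ω| ≤ (n + 1) * M := by
    intro s ω h
    calc |∑ i ∈ s, X i ω| ≤ ∑ i ∈ s, |X i ω| := Finset.abs_sum_le_sum_abs _ _
    _ ≤ ∑ _i ∈ s, M := Finset.sum_le_sum (fun i _ => h i)
    _ = s.card * M := by rw [Finset.sum_const, nsmul_eq_mul]
    _ ≤ (n + 1) * M := by
        have : (s.card : ℝ) ≤ (n + 1 : ℕ) := by
          exact_mod_cast Finset.card_le_card (Finset.subset_univ s) |>.trans
            (le_of_eq (by simp [Fintype.card_fin]))
        exact mul_le_mul_of_nonneg_right (by exact_mod_cast this) hM0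
  have hXint : ∀ k, Integrable (X k) μ := fun k =>
    (integrable_const M).mono' (hmeas k).aestronglyMeasurable
      (by filter_upwards [hM k] with ω h using by simpa [Real.norm_eq_abs] using h)
  have hintExp : ∀ s : Finset (Fin (n + 1)),
      Integrable (fun ω => Real.exp (l * ∑ i ∈ s, X i ω)) μ := by
    intro s
    refine (integrable_const (Real.exp (l * ((n + 1) * M)))).mono'
      ((Finset.measurable_sum _ (fun i _ => hmeas i)).const_mul l).exp.aestronglyMeasurable ?_
    filter_upwards [hbd] with ω h
    rw [Real.norm_eq_abs, abs_of_pos (Real.exp_pos _), Real.exp_le_exp]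
    exact mul_le_mul_of_nonneg_left (le_trans (le_abs_self _) (hsumbd s ω h)) hl
  have hG1 : ∀ s : Finset (Fin (n + 1)),
      1 ≤ ∫ ω, Real.exp (l * ∑ i ∈ s, X i ω) ∂μ := by
    intro s
    have hSi : Integrable (fun ω => ∑ i ∈ s, X i ω) μ :=
      integrable_finset_sum _ (fun i _ => hXint i)
    have h1 : ∫ ω, (l * ∑ i ∈ s, X i ω + 1) ∂μ = 1 := by
      rw [integral_add (hSi.const_mul l) (integrable_const 1),
        integral_const_mul, integral_finset_sum _ (fun i _ => hXint i)]
      simp [hmean]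
    calc (1 : ℝ) = ∫ ω, (l * ∑ i ∈ s, X i ω + 1) ∂μ := h1.symm
    _ ≤ ∫ ω, Real.exp (l * ∑ i ∈ s, X i ω) ∂μ := by
        refine integral_mono ((hSi.const_mul l).add (integrable_const 1)) (hintExp s) ?_
        intro ω
        exact Real.add_one_le_exp _
  -- the target function
  set H : Ω → ℝ := fun ω => Real.exp (l * ∑ i, X i ω) with hHdef
  have hHmeas : Measurable H :=
    ((Finset.measurable_sum _ (fun i _ => hmeas i)).const_mul l).exp
  have hHint : Integrable H μ := by simpa [hHdef] using hintExp Finset.univ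
  have hHnonneg : ∀ ω, 0 ≤ H ω := fun ω => (Real.exp_pos _).le
  -- key inequality for each k
  have hkey : ∀ k, Real.exp (l * t) * (μ (A k)).toReal ≤
      ∫ ω, (A k).indicator H ω ∂μ := by
    intro k
    set F : Ω → ℝ := fun ω => (A k).indicator (fun ω => Real.exp (l * S k ω)) ω with hF
    set G : Ω → ℝ := fun ω => Real.exp (l * ∑ i ∈ (Finset.Iic k)ᶜ, X i ω) with hG
    have hFmeas : Measurable F :=
      (((hSmeas k).const_mul l).exp).indicator (hAmeas k)
    have hGmeas : Measurable G :=
      ((Finset.measurable_sum _ (fun i _ => hmeas i)).const_mul l).exp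
    have hFint : Integrable F μ := by
      refine (integrable_const (Real.exp (l * ((n + 1) * M)))).mono'
        hFmeas.aestronglyMeasurable ?_
      filter_upwards [hbd] with ω h
      refine le_trans (norm_indicator_le_norm_self _ _) ?_
      rw [Real.norm_eq_abs, abs_of_pos (Real.exp_pos _), Real.exp_le_exp]
      exact mul_le_mul_of_nonneg_left (le_trans (le_abs_self _) (hsumbd _ ω h)) hl
    have hGint : Integrable G μ := hintExp _
    -- independence
    have hiI : iIndep (fun i => MeasurableSpace.comap (X i) inferInstance) μ :=
      (iIndepFun_iff_iIndep _ _ _).1 hindep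
    have hle : ∀ i, MeasurableSpace.comap (X i) inferInstance ≤ _ := fun i => (hmeas i).comap_le
    have hInd := indep_biSup_compl hle hiI ↑(Finset.Iic k)
    have hXm1 : ∀ i, i ∈ Finset.Iic k →
        Measurable[⨆ j ∈ (↑(Finset.Iic k) : Set (Fin (n + 1))),
          MeasurableSpace.comap (X j) inferInstance] (X i) := by
      intro i hi
      exact Measurable.mono (measurable_iff_comap_le.2 le_rfl)
        (le_biSup (fun j : Fin (n + 1) => MeasurableSpace.comap (X j)
          (inferInstance : MeasurableSpace ℝ)) (Finset.mem_coe.2 hi)) le_rfl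
    have hSm1 : ∀ j, j ≤ k →
        Measurable[⨆ j ∈ (↑(Finset.Iic k) : Set (Fin (n + 1))),
          MeasurableSpace.comap (X j) inferInstance] (S j) := by
      intro j hj
      exact Finset.measurable_sum _ (fun i hi =>
        hXm1 i (Finset.mem_Iic.2 (le_trans (Finset.mem_Iic.1 hi) hj)))
    have hAm1 : MeasurableSet[⨆ j ∈ (↑(Finset.Iic k) : Set (Fin (n + 1))),
        MeasurableSpace.comap (X j) inferInstance] (A k) := by
      have : A k = {ω | t < S k ω} ∩ ⋂ j, {ω | j < k → S j ω ≤ t} := by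
        ext ω; simp [hA, Set.mem_iInter]
      rw [this]
      refine MeasurableSet.inter (measurableSet_lt measurable_const (hSm1 k le_rfl))
        (MeasurableSet.iInter fun j => ?_)
      by_cases hj : j < k
      · simp only [hj, forall_true_left]
        exact measurableSet_le (hSm1 j hj.le) measurable_const
      · simp [hj]
    have hFm1 : Measurable[⨆ j ∈ (↑(Finset.Iic k) : Set (Fin (n + 1))),
        MeasurableSpace.comap (X j) inferInstance] F := by
      exact Measurable.indicator
        (Real.measurable_exp.comp ((hSm1 k le_rfl).const_mul l)) hAm1
    have hGm2 : Measurable[⨆ j ∈ (↑(Finset.Iic k) : Set (Fin (n + 1)))ᶜ,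
        MeasurableSpace.comap (X j) inferInstance] G := by
      refine Real.measurable_exp.comp (Measurable.const_mul ?_ l)
      refine Finset.measurable_sum _ (fun i hi => ?_)
      exact Measurable.mono (measurable_iff_comap_le.2 le_rfl)
        (le_biSup (fun j : Fin (n + 1) => MeasurableSpace.comap (X j)
          (inferInstance : MeasurableSpace ℝ)) (by simpa using hi)) le_rfl
    have hIndFG : IndepFun F G μ := by
      rw [IndepFun_iff_Indep]
      exact indep_of_indep_of_le_left
        (indep_of_indep_of_le_right hInd hGm2.comap_le) hFm1.comap_le
    have hFG : ∀ ω, F ω * G ω = (A k).indicator H ω := by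
      intro ω
      by_cases h : ω ∈ A k
      · simp only [hF, hG, hHdef, Set.indicator_of_mem h]
        rw [← Real.exp_add, ← mul_add, hS]
        rw [Finset.sum_add_sum_compl]
      · simp [hF, Set.indicator_of_notMem h]
    have hmul : ∫ ω, F ω * G ω ∂μ = (∫ ω, F ω ∂μ) * ∫ ω, G ω ∂μ :=
      hIndFG.integral_mul_eq_mul_integral hFint.1 hGint.1
    have hFlow : Real.exp (l * t) * (μ (A k)).toReal ≤ ∫ ω, F ω ∂μ := by
      have h0 : ∫ ω, (A k).indicator (fun _ => Real.exp (l * t)) ω ∂μ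
          = Real.exp (l * t) * (μ (A k)).toReal := by
        rw [integral_indicator_const _ (hAmeas k)]
        rw [smul_eq_mul, mul_comm]
        rfl
      rw [← h0]
      refine integral_mono (by
        simpa using (integrable_const (Real.exp (l * t))).indicator (hAmeas k)) hFint ?_
      intro ω
      by_cases h : ω ∈ A k
      · simp only [hF, Set.indicator_of_mem h]
        exact Real.exp_le_exp.2 (mul_le_mul_of_nonneg_left h.1.le hl)
      · simp [hF, Set.indicator_of_notMem h]
    have hFnonneg : 0 ≤ ∫ ω, F ω ∂μ := by
      refine integral_nonneg fun ω => ?_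
      exact Set.indicator_nonneg (fun ω _ => (Real.exp_pos _).le) ω
    calc Real.exp (l * t) * (μ (A k)).toReal ≤ ∫ ω, F ω ∂μ := hFlow
    _ ≤ (∫ ω, F ω ∂μ) * ∫ ω, G ω ∂μ := le_mul_of_one_le_right hFnonneg (hG1 _)
    _ = ∫ ω, F ω * G ω ∂μ := hmul.symm
    _ = ∫ ω, (A k).indicator H ω ∂μ := by
        congr 1; funext ω; exact hFG ω
  -- covering and disjointness
  have hd : ∀ j k : Fin (n + 1), j < k → Disjoint (A j) (A k) := by
    intro j k h
    rw [Set.disjoint_left]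
    rintro ω ⟨hj1, _⟩ ⟨_, hk2⟩
    exact absurd hj1 (not_lt.2 (hk2 j h))
  have hdisj : Pairwise (Function.onFun Disjoint A) := by
    intro j k hne
    rcases lt_or_gt_of_ne hne with h | h
    · exact hd j k h
    · exact (hd k j h).symm
  have hcover : {ω | ∃ k, t < S k ω} = ⋃ k, A k := by
    ext ω
    simp only [Set.mem_setOf_eq, Set.mem_iUnion]
    constructor
    · rintro ⟨k, hk⟩
      have hne : (Finset.univ.filter (fun j => t < S j ω)).Nonempty :=
        ⟨k, by simp [hk]⟩
      set k₀ := (Finset.univ.filter (fun j => t < S j ω)).min' hne with hk₀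
      have hk₀mem := Finset.min'_mem _ hne
      rw [Finset.mem_filter] at hk₀mem
      refine ⟨k₀, hk₀mem.2, fun j hj => ?_⟩
      by_contra hjt
      push_neg at hjt
      have : k₀ ≤ j := Finset.min'_le _ j (by simp [hjt])
      exact absurd hj (not_lt.2 this)
    · rintro ⟨k, hk1, _⟩
      exact ⟨k, hk1⟩
  have hmeasU : μ {ω | ∃ k, t < S k ω} = ∑ k, μ (A k) := by
    rw [hcover, measure_iUnion hdisj hAmeas, tsum_fintype]
  have htoReal : (μ {ω | ∃ k, t < S k ω}).toReal = ∑ k, (μ (A k)).toReal := by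
    rw [hmeasU, ENNReal.toReal_sum (fun k _ => measure_ne_top μ _)]
  have hsumineq : Real.exp (l * t) * (μ {ω | ∃ k, t < S k ω}).toReal ≤ ∫ ω, H ω ∂μ := by
    rw [htoReal, Finset.mul_sum]
    calc ∑ k, Real.exp (l * t) * (μ (A k)).toReal
        ≤ ∑ k, ∫ ω, (A k).indicator H ω ∂μ := Finset.sum_le_sum (fun k _ => hkey k)
    _ = ∑ k, ∫ ω in A k, H ω ∂μ := by
        refine Finset.sum_congr rfl (fun k _ => ?_)
        rw [integral_indicator (hAmeas k)]
    _ = ∫ ω in ⋃ k, A k, H ω ∂μ := by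
        rw [integral_iUnion hAmeas hdisj hHint.integrableOn, tsum_fintype]
    _ ≤ ∫ ω, H ω ∂μ :=
        setIntegral_le_integral hHint (Filter.Eventually.of_forall hHnonneg)
  have hexppos : (0 : ℝ) < Real.exp (l * t) := Real.exp_pos _
  rw [Real.exp_neg]
  rw [inv_mul_eq_div, le_div_iff₀ hexppos]
  calc (μ {ω | ∃ k, t < ∑ i ∈ Finset.Iic k, X i ω}).toReal * Real.exp (l * t)
      = Real.exp (l * t) * (μ {ω | ∃ k, t < S k ω}).toReal := by rw [mul_comm]
  _ ≤ ∫ ω, H ω ∂μ := hsumineq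
theorem maximal_bernstein_inequality
    {Ω : Type*} [MeasurableSpace Ω] (μ : Measure Ω) [IsProbabilityMeasure μ]
    {n : ℕ} (X : Fin n → Ω → ℝ) (hmeas : ∀ k, Measurable (X k))
    (hindep : iIndepFun X μ)
    (M : ℝ) (hM : ∀ k, ∀ᵐ ω ∂μ, |X k ω| ≤ M)
    (hmean : ∀ k, μ[X k] = 0)
    (σ : Fin n → ℝ) (hvar : ∀ k, variance (X k) μ = σ k ^ 2)
    (t : ℝ) (ht : 0 < t) :
    (μ {ω | ∃ k : Fin n, t < |∑ i ∈ Finset.Iic k, X i ω|}).toReal ≤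
      2 * Real.exp (-(t ^ 2) / (2 * ∑ k : Fin n, σ k ^ 2 + 2 / 3 * M * t)) := by
  rcases n with _ | m
  · have hempty : {ω | ∃ k : Fin 0, t < |∑ i ∈ Finset.Iic k, X i ω|} = ∅ := by
      ext ω; simp [Fin.isEmpty]
    rw [hempty]
    simp only [measure_empty, ENNReal.toReal_zero]
    positivity
  · -- get 0 ≤ M
    haveI : (Filter.NeBot (ae μ)) := ae_neBot.2 (IsProbabilityMeasure.ne_zero μ)
    obtain ⟨ω₀, hω₀⟩ := (hM 0).exists
    have hM0 : 0 ≤ M := le_trans (abs_nonneg _) hω₀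
    set v : ℝ := ∑ k : Fin (m + 1), σ k ^ 2 with hv
    have hv0 : 0 ≤ v := Finset.sum_nonneg (fun k _ => sq_nonneg _)
    rcases eq_or_lt_of_le (show (0 : ℝ) ≤ 2 * v + 2 / 3 * M * t by positivity) with hD | hD
    · -- degenerate denominator
      rw [← hD]
      simp only [div_zero, neg_zero, Real.exp_zero, mul_one]
      have h1 : (μ {ω | ∃ k : Fin (m + 1), t < |∑ i ∈ Finset.Iic k, X i ω|}).toReal ≤ 1 := by
        have := ENNReal.toReal_mono (by norm_num) (prob_le_one
          (μ := μ) (s := {ω | ∃ k : Fin (m + 1), t < |∑ i ∈ Finset.Iic k, X i ω|}))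
        simpa using this
      linarith
    · -- choose the optimal l
      obtain ⟨l, hl0, hlM, hlexp⟩ : ∃ l : ℝ, 0 ≤ l ∧ l * M < 3 ∧
          -(l * t) + l ^ 2 * v / (2 * (1 - l * M / 3))
            ≤ -(t ^ 2) / (2 * v + 2 / 3 * M * t) := by
        rcases eq_or_lt_of_le hv0 with hveq | hvpos
        · -- v = 0, then M > 0
          have hMpos : 0 < M := by
            rcases lt_or_eq_of_le hM0 with h | h
            · exact h
            · exfalso; rw [← hveq, ← h] at hD; simp at hD
          refine ⟨3 / (2 * M), by positivity, ?_, ?_⟩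
          · rw [div_mul_eq_mul_div, mul_comm 2 M, ← div_div, mul_div_assoc]
            rw [div_self hMpos.ne']
            norm_num
          · rw [← hveq]
            have : -(t ^ 2) / (2 * 0 + 2 / 3 * M * t) = -(3 / (2 * M) * t) := by
              field_simp
              ring
            rw [this]
            simp
        · -- v > 0
          set P : ℝ := v + M * t / 3 with hP
          have hPpos : 0 < P := by positivity
          refine ⟨t / P, by positivity, ?_, ?_⟩
          · rw [div_mul_eq_mul_div, div_lt_iff₀ hPpos, hP]
            nlinarith
          · have h1m : 1 - t / P * M / 3 = v / P := by
              field_simp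
              ring
            rw [h1m]
            have h2 : (t / P) ^ 2 * v / (2 * (v / P)) = t ^ 2 / (2 * P) := by
              rw [div_pow]
              field_simp
            rw [h2]
            have h3 : 2 * v + 2 / 3 * M * t = 2 * P := by
              rw [hP]; ring
            rw [h3]
            have : -(t / P * t) + t ^ 2 / (2 * P) = -(t ^ 2) / (2 * P) := by
              field_simp
              ring
            rw [this]
      -- uniform one-sided bound
      have hbound : ∀ Y : Fin (m + 1) → Ω → ℝ, (∀ k, Measurable (Y k)) →
          iIndepFun Y μ →
          (∀ k, ∀ᵐ ω ∂μ, |Y k ω| ≤ M) → (∀ k, μ[Y k] = 0) →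
          (∀ k, variance (Y k) μ = σ k ^ 2) →
          (μ {ω | ∃ k, t < ∑ i ∈ Finset.Iic k, Y i ω}).toReal ≤
            Real.exp (-(t ^ 2) / (2 * v + 2 / 3 * M * t)) := by
        intro Y hYmeas hYindep hYM hYmean hYvar
        have step1 := mbiOneSided Y hYmeas hYindep hM0 hYM hYmean ht hl0
        have hmgf : ∫ ω, Real.exp (l * ∑ i, Y i ω) ∂μ =
            mgf (∑ i, Y i) μ l := by
          rw [mgf]
          congr 1
          funext ω
          simp [Finset.sum_apply]
        have hprod : mgf (∑ i, Y i) μ l = ∏ i, mgf (Y i) μ l :=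
          hYindep.mgf_sum hYmeas Finset.univ
        have hfac : ∀ i : Fin (m + 1), mgf (Y i) μ l ≤
            Real.exp (l ^ 2 * σ i ^ 2 / (2 * (1 - l * M / 3))) := by
          intro i
          have := mbiMgf (hYmeas i) hl0 hM0 (hYM i) (hYmean i) hlM
          rwa [hYvar i] at this
        have hprodle : ∏ i, mgf (Y i) μ l ≤
            Real.exp (l ^ 2 * v / (2 * (1 - l * M / 3))) := by
          calc ∏ i, mgf (Y i) μ l
              ≤ ∏ i : Fin (m + 1), Real.exp (l ^ 2 * σ i ^ 2 / (2 * (1 - l * M / 3))) :=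
                Finset.prod_le_prod (fun i _ => mgf_nonneg) (fun i _ => hfac i)
          _ = Real.exp (∑ i : Fin (m + 1), l ^ 2 * σ i ^ 2 / (2 * (1 - l * M / 3))) := by
                rw [Real.exp_sum]
          _ = Real.exp (l ^ 2 * v / (2 * (1 - l * M / 3))) := by
                congr 1
                rw [hv, Finset.mul_sum, ← Finset.sum_div]
        calc (μ {ω | ∃ k, t < ∑ i ∈ Finset.Iic k, Y i ω}).toReal
            ≤ Real.exp (-(l * t)) * ∫ ω, Real.exp (l * ∑ i, Y i ω) ∂μ := step1
        _ ≤ Real.exp (-(l * t)) * Real.exp (l ^ 2 * v / (2 * (1 - l * M / 3))) := by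
            refine mul_le_mul_of_nonneg_left ?_ (Real.exp_pos _).le
            rw [hmgf, hprod]
            exact hprodle
        _ = Real.exp (-(l * t) + l ^ 2 * v / (2 * (1 - l * M / 3))) := by
            rw [← Real.exp_add]
        _ ≤ Real.exp (-(t ^ 2) / (2 * v + 2 / 3 * M * t)) := Real.exp_le_exp.2 hlexp
      -- apply to X and -X
      set s1 : Set Ω := {ω | ∃ k, t < ∑ i ∈ Finset.Iic k, X i ω} with hs1
      set Y : Fin (m + 1) → Ω → ℝ := fun k ω => -X k ω with hY
      set s2 : Set Ω := {ω | ∃ k, t < ∑ i ∈ Finset.Iic k, Y i ω} with hs2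
      have hsub : {ω | ∃ k : Fin (m + 1), t < |∑ i ∈ Finset.Iic k, X i ω|} ⊆ s1 ∪ s2 := by
        rintro ω ⟨k, hk⟩
        rcases lt_abs.1 hk with h | h
        · exact Or.inl ⟨k, h⟩
        · refine Or.inr ⟨k, ?_⟩
          show t < ∑ i ∈ Finset.Iic k, -X i ω
          rw [Finset.sum_neg_distrib]
          exact h
      have hb1 : (μ s1).toReal ≤ Real.exp (-(t ^ 2) / (2 * v + 2 / 3 * M * t)) :=
        hbound X hmeas hindep hM hmean hvar
      have hb2 : (μ s2).toReal ≤ Real.exp (-(t ^ 2) / (2 * v + 2 / 3 * M * t)) := by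
        refine hbound Y (fun k => (hmeas k).neg) ?_ (fun k => ?_) (fun k => ?_) (fun k => ?_)
        · have := hindep.comp (fun _ => Neg.neg) (fun _ => measurable_neg)
          exact this
        · filter_upwards [hM k] with ω h
          rw [hY]; simpa [abs_neg] using h
        · rw [hY]
          simp only [integral_neg]
          rw [hmean k, neg_zero]
        · show variance (fun ω => -X k ω) μ = σ k ^ 2
          have h : (fun ω => -X k ω) = fun ω => (-1 : ℝ) * X k ω := by funext ω; ring
          rw [h, variance_const_mul, hvar k]
          norm_num
      have hle : μ {ω | ∃ k : Fin (m + 1), t < |∑ i ∈ Finset.Iic k, X i ω|} ≤ μ s1 + μ s2 :=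
        le_trans (measure_mono hsub) (measure_union_le s1 s2)
      have hfin : μ s1 + μ s2 ≠ ⊤ := ENNReal.add_ne_top.2 ⟨measure_ne_top μ s1, measure_ne_top μ s2⟩
      calc (μ {ω | ∃ k : Fin (m + 1), t < |∑ i ∈ Finset.Iic k, X i ω|}).toReal
          ≤ (μ s1 + μ s2).toReal := ENNReal.toReal_mono hfin hle
      _ = (μ s1).toReal + (μ s2).toReal := ENNReal.toReal_add (measure_ne_top μ s1) (measure_ne_top μ s2)
      _ ≤ 2 * Real.exp (-(t ^ 2) / (2 * v + 2 / 3 * M * t)) := by linarith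
end

section
/- For every natural number s ≥ 1 and every δ ∈ (0,1], N_{[]}(δ, C^s) ≤ C_s · (s^s / s!) · (1/δ + 1)^s, where C_s = max{1, 1.1^{s−101}}. -/
open MeasureTheory Set
open scoped ENNReal

namespace BrAux

def box {n : ℕ} (x : Fin n → ℝ) : Set (Fin n → ℝ) := Set.pi Set.univ fun i => Set.Ico 0 (x i)

lemma box_mono {n : ℕ} {x y : Fin n → ℝ} (h : x ≤ y) : box x ⊆ box y :=
  Set.pi_mono fun i _ => Set.Ico_subset_Ico le_rfl (h i)

lemma box_mem {n : ℕ} {x : Fin n → ℝ} (hx : x ∈ Set.Icc 0 1) : box x ∈ anchoredFamily n :=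
  ⟨x, hx, rfl⟩

lemma measurable_box {n : ℕ} (x : Fin n → ℝ) : MeasurableSet (box x) :=
  MeasurableSet.univ_pi fun _ => measurableSet_Ico

lemma vol_box {n : ℕ} (x : Fin n → ℝ) (hx : ∀ i, 0 ≤ x i) :
    volume (box x) = ENNReal.ofReal (∏ i, x i) := by
  rw [box, volume_pi_pi]
  simp only [Real.volume_Ico, sub_zero]
  exact (ENNReal.ofReal_prod_of_nonneg (fun i _ => hx i)).symm

lemma pow_mvt (n : ℕ) {a b : ℝ} (hb : 0 ≤ b) (hab : b ≤ a) :
    (n + 1 : ℝ) * b ^ n * (a - b) ≤ a ^ (n + 1) - b ^ (n + 1) := by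
  induction n with
  | zero => simp
  | succ n ih =>
    have ha : 0 ≤ a := hb.trans hab
    have h1 : b ^ (n + 1) ≤ a ^ (n + 1) := pow_le_pow_left₀ hb hab _
    have h2 : (0 : ℝ) ≤ b ^ n := pow_nonneg hb n
    have h3 : b ^ (n+1) = b * b^n := by ring
    have key : a * ((n + 1 : ℝ) * b ^ n * (a - b)) ≤ a * (a ^ (n + 1) - b ^ (n + 1)) :=
      mul_le_mul_of_nonneg_left ih ha
    have hexp : a ^ (n + 2) - b ^ (n + 2) = a * (a ^ (n + 1) - b ^ (n + 1)) + (a - b) * b ^ (n+1) := by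
      ring
    have hX : (0:ℝ) ≤ (n + 1 : ℝ) * b ^ n * (a - b) :=
      mul_nonneg (mul_nonneg (by positivity) h2) (sub_nonneg.2 hab)
    have key2 : b * ((n + 1 : ℝ) * b ^ n * (a - b)) ≤ a * ((n + 1 : ℝ) * b ^ n * (a - b)) :=
      mul_le_mul_of_nonneg_right hab hX
    push_cast
    calc ((n:ℝ) + 1 + 1) * b ^ (n + 1) * (a - b)
        = b * ((n + 1 : ℝ) * b ^ n * (a - b)) + (a - b) * b ^ (n + 1) := by ring
      _ ≤ a * ((n + 1 : ℝ) * b ^ n * (a - b)) + (a - b) * b ^ (n + 1) := by linarith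
      _ ≤ a * (a ^ (n + 1) - b ^ (n + 1)) + (a - b) * b ^ (n + 1) := by linarith
      _ = a ^ (n + 1 + 1) - b ^ (n + 1 + 1) := by ring

def GoodGrid (d : ℕ) (ε : ℝ) (P : Finset ((Fin d → ℝ) × (Fin d → ℝ))) : Prop :=
  (∀ p ∈ P, p.1 ∈ Set.Icc (0 : Fin d → ℝ) 1 ∧ p.2 ∈ Set.Icc (0 : Fin d → ℝ) 1 ∧ p.1 ≤ p.2 ∧
      ∏ i, p.2 i - ∏ i, p.1 i ≤ ε) ∧
  ∀ x ∈ Set.Icc (0 : Fin d → ℝ) 1, ∃ p ∈ P, p.1 ≤ x ∧ x ≤ p.2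

lemma base_grid (δ : ℝ) (hδ : 0 < δ) :
    ∃ P : Finset ((Fin 1 → ℝ) × (Fin 1 → ℝ)), GoodGrid 1 δ P ∧
      (P.card : ℝ) ≤ (1 / δ + 1) := by
  classical
  set m := ⌈1/δ⌉₊ with hm
  have hm1 : 1 ≤ m := Nat.one_le_ceil_iff.mpr (by positivity)
  set f : ℕ → ((Fin 1 → ℝ) × (Fin 1 → ℝ)) :=
    fun k => ((fun _ => min ((k:ℝ) * δ) 1), (fun _ => min (((k:ℝ) + 1) * δ) 1)) with hf
  refine ⟨(Finset.range m).image f, ?_, ?_⟩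
  · constructor
    · rintro p hp
      simp only [Finset.mem_image, Finset.mem_range] at hp
      obtain ⟨k, hk, rfl⟩ := hp
      have h0k : (0:ℝ) ≤ (k:ℝ) * δ := by positivity
      have h0k1 : (0:ℝ) ≤ ((k:ℝ) + 1) * δ := by positivity
      refine ⟨⟨fun i => le_min h0k zero_le_one, fun i => min_le_right _ _⟩,
        ⟨fun i => le_min h0k1 zero_le_one, fun i => min_le_right _ _⟩,
        fun i => min_le_min (by nlinarith) le_rfl, ?_⟩
      simp only [hf, Fin.prod_univ_one]
      rcases le_total ((k:ℝ) * δ) 1 with h | h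
      · have h1 : min ((k:ℝ) * δ) 1 = (k:ℝ) * δ := min_eq_left h
        have h2 := min_le_left (((k:ℝ) + 1) * δ) 1
        rw [h1]; nlinarith
      · have h1 : min ((k:ℝ) * δ) 1 = 1 := min_eq_right h
        have h2 := min_le_right (((k:ℝ) + 1) * δ) 1
        rw [h1]; linarith
    · intro x hx
      obtain ⟨hx0, hx1⟩ := hx
      have ht0 : 0 ≤ x 0 := hx0 0
      have ht1 : x 0 ≤ 1 := hx1 0
      set k := min ⌊x 0 / δ⌋₊ (m - 1) with hk
      have hkm : k < m := lt_of_le_of_lt (min_le_right _ _) (Nat.sub_lt hm1 one_pos)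
      have hkd : (k:ℝ) * δ ≤ x 0 := by
        have h1 : (k:ℝ) ≤ ⌊x 0 / δ⌋₊ := by exact_mod_cast min_le_left _ _
        have h2 : (⌊x 0 / δ⌋₊ : ℝ) ≤ x 0 / δ := Nat.floor_le (by positivity)
        calc (k:ℝ) * δ ≤ (x 0 / δ) * δ := by nlinarith
          _ = x 0 := by field_simp
      have hup : x 0 ≤ ((k:ℝ) + 1) * δ ∨ 1 ≤ ((k:ℝ) + 1) * δ := by
        rcases min_cases ⌊x 0 / δ⌋₊ (m - 1) with ⟨he, _⟩ | ⟨he, _⟩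
        · left
          have h3 : x 0 / δ < (⌊x 0 / δ⌋₊ : ℝ) + 1 := Nat.lt_floor_add_one _
          rw [hk, he]
          calc x 0 = (x 0 / δ) * δ := by field_simp
            _ ≤ ((⌊x 0 / δ⌋₊ : ℝ) + 1) * δ := by nlinarith
        · right
          have hk1 : (k:ℝ) + 1 = (m:ℝ) := by
            rw [hk, he]; push_cast [Nat.cast_sub hm1]; ring
          rw [hk1]
          have h3 : (1:ℝ)/δ ≤ (m:ℝ) := Nat.le_ceil _
          calc (1:ℝ) = (1/δ) * δ := by field_simp
            _ ≤ (m:ℝ) * δ := by nlinarith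
      refine ⟨f k, Finset.mem_image.mpr ⟨k, Finset.mem_range.mpr hkm, rfl⟩, ?_, ?_⟩
      · intro i
        rw [Subsingleton.elim i 0]
        exact le_trans (min_le_left _ _) hkd
      · intro i
        rw [Subsingleton.elim i 0]
        rcases hup with h | h
        · exact le_min h ht1
        · rw [hf]
          simp only
          rw [min_eq_right h]
          exact ht1
  · calc (((Finset.range m).image f).card : ℝ)
        ≤ ((Finset.range m).card : ℝ) := by exact_mod_cast Finset.card_image_le
      _ = m := by simp
      _ ≤ 1/δ + 1 := (Nat.ceil_lt_add_one (by positivity)).le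

lemma snoc_le {d : ℕ} {u v : Fin d → ℝ} {a c : ℝ} (h : u ≤ v) (h2 : a ≤ c) :
    (Fin.snoc u a : Fin (d+1) → ℝ) ≤ Fin.snoc v c := by
  intro i
  refine Fin.lastCases ?_ ?_ i
  · simpa using h2
  · intro j; simpa using h j

lemma prod_snoc' {d : ℕ} (u : Fin d → ℝ) (a : ℝ) :
    ∏ i, (Fin.snoc u a : Fin (d+1) → ℝ) i = (∏ i, u i) * a := by
  rw [Fin.prod_univ_castSucc]; simp

set_option maxHeartbeats 2000000 in
lemma step_grid (d : ℕ) (hd : 1 ≤ d)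
    (IH : ∀ ε : ℝ, 0 < ε → ∃ P : Finset ((Fin d → ℝ) × (Fin d → ℝ)),
      GoodGrid d ε P ∧ (P.card : ℝ) ≤ ((d:ℝ)^d / d.factorial) * (1/ε+1)^d)
    (δ : ℝ) (hδ : 0 < δ) :
    ∃ P : Finset ((Fin (d+1) → ℝ) × (Fin (d+1) → ℝ)), GoodGrid (d+1) δ P ∧
      (P.card : ℝ) ≤ (((d:ℝ)+1)^(d+1) / (d+1).factorial) * (1/δ+1)^(d+1) := by
  classical
  have hd0 : (0:ℝ) < d := by exact_mod_cast hd
  set w : ℝ := δ / (d+1) with hw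
  have hw0 : 0 < w := by positivity
  set m := ⌈1/w⌉₊ with hm
  have hm1 : 1 ≤ m := Nat.one_le_ceil_iff.mpr (by positivity)
  set b : ℕ → ℝ := fun j => 1 - j * w with hb
  have hbpos : ∀ j < m, 0 < b j := by
    intro j hj
    have h1 : (j:ℝ) < 1/w := Nat.lt_ceil.mp hj
    have h2 : (j:ℝ) * w < 1 := by
      calc (j:ℝ) * w < (1/w) * w := by nlinarith
        _ = 1 := by field_simp
    simp only [hb]; linarith
  have hble : ∀ j : ℕ, b j ≤ 1 := by
    intro j; simp only [hb]
    have : (0:ℝ) ≤ (j:ℝ) * w := by positivity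
    linarith
  have key : ∀ j : ℕ, ∃ Q : Finset ((Fin d → ℝ) × (Fin d → ℝ)),
      j < m → GoodGrid d ((d:ℝ) * w / b j) Q ∧
        (Q.card : ℝ) ≤ ((d:ℝ)^d / d.factorial) * (b j / ((d:ℝ)*w) + 1)^d := by
    intro j
    by_cases hj : j < m
    · obtain ⟨Q, h1, h2⟩ := IH ((d:ℝ) * w / b j)
        (div_pos (mul_pos hd0 hw0) (hbpos j hj))
      rw [one_div_div] at h2
      exact ⟨Q, fun _ => ⟨h1, h2⟩⟩
    · exact ⟨∅, fun h => absurd h hj⟩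
  choose Q hQ using key
  set lift : ℕ → ((Fin d → ℝ) × (Fin d → ℝ)) → ((Fin (d+1) → ℝ) × (Fin (d+1) → ℝ)) :=
    fun j p => (Fin.snoc p.1 (max (1 - ((j:ℝ)+1) * w) 0), Fin.snoc p.2 (b j)) with hlift
  have hδw : (d:ℝ) * w + w = δ := by rw [hw]; field_simp
  refine ⟨(Finset.range m).biUnion (fun j => (Q j).image (lift j)), ⟨?_, ?_⟩, ?_⟩
  · -- bracket properties
    rintro p hp
    simp only [Finset.mem_biUnion, Finset.mem_image, Finset.mem_range] at hp
    obtain ⟨j, hjm, q, hq, rfl⟩ := hp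
    obtain ⟨hq1, hq2, hqle, hqprod⟩ := (hQ j hjm).1.1 q hq
    have hbj := hbpos j hjm
    have hjw : (0:ℝ) ≤ ((j:ℝ)+1) * w := by positivity
    have hlo0 : (0:ℝ) ≤ max (1 - ((j:ℝ)+1) * w) 0 := le_max_right _ _
    have hlo1 : max (1 - ((j:ℝ)+1) * w) 0 ≤ 1 := max_le (by linarith) zero_le_one
    have hlob : max (1 - ((j:ℝ)+1) * w) 0 ≤ b j :=
      max_le (by simp only [hb]; nlinarith) hbj.le
    have hwlo : b j - max (1 - ((j:ℝ)+1) * w) 0 ≤ w := by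
      have := le_max_left (1 - ((j:ℝ)+1) * w) 0
      simp only [hb]; nlinarith
    refine ⟨⟨fun i => ?_, fun i => ?_⟩, ⟨fun i => ?_, fun i => ?_⟩,
      snoc_le hqle hlob, ?_⟩
    · refine Fin.lastCases ?_ ?_ i
      · simpa [hlift] using hlo0
      · intro i; simpa [hlift] using hq1.1 i
    · refine Fin.lastCases ?_ ?_ i
      · simpa [hlift] using hlo1
      · intro i; simpa [hlift] using hq1.2 i
    · refine Fin.lastCases ?_ ?_ i
      · simpa [hlift] using hbj.le
      · intro i; simpa [hlift] using hq2.1 i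
    · refine Fin.lastCases ?_ ?_ i
      · simpa [hlift] using hble j
      · intro i; simpa [hlift] using hq2.2 i
    · -- volume bound
      simp only [hlift, prod_snoc']
      have hp1nn : (0:ℝ) ≤ ∏ i, q.1 i := Finset.prod_nonneg fun i _ => hq1.1 i
      have hp1le : (∏ i, q.1 i) ≤ 1 := Finset.prod_le_one (fun i _ => hq1.1 i) (fun i _ => hq1.2 i)
      have h1 : (∏ i, q.2 i - ∏ i, q.1 i) * b j ≤ ((d:ℝ) * w / b j) * b j :=
        mul_le_mul_of_nonneg_right hqprod hbj.le
      rw [div_mul_cancel₀ _ hbj.ne'] at h1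
      have h2 : (b j - max (1 - ((j:ℝ)+1) * w) 0) * (∏ i, q.1 i) ≤ w * 1 :=
        mul_le_mul hwlo hp1le hp1nn hw0.le
      nlinarith [h1, h2]
  · -- coverage
    intro x hx
    have ht0 : 0 ≤ x (Fin.last d) := hx.1 (Fin.last d)
    have ht1 : x (Fin.last d) ≤ 1 := hx.2 (Fin.last d)
    set t := x (Fin.last d) with htdef
    set j := min ⌊(1 - t)/w⌋₊ (m - 1) with hj
    have hjm : j < m := lt_of_le_of_lt (min_le_right _ _) (Nat.sub_lt hm1 one_pos)
    have hbt : t ≤ b j := by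
      have h1 : (j:ℝ) ≤ ⌊(1 - t)/w⌋₊ := by exact_mod_cast min_le_left _ _
      have h2 : (⌊(1 - t)/w⌋₊ : ℝ) ≤ (1 - t)/w := Nat.floor_le (div_nonneg (by linarith) hw0.le)
      have h3 : (j:ℝ) * w ≤ 1 - t := by
        calc (j:ℝ) * w ≤ ((1 - t)/w) * w := by nlinarith
          _ = 1 - t := by field_simp
      simp only [hb]; linarith
    have hlo : max (1 - ((j:ℝ)+1) * w) 0 ≤ t := by
      apply max_le _ ht0
      rcases min_cases ⌊(1 - t)/w⌋₊ (m - 1) with ⟨he, _⟩ | ⟨he, _⟩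
      · have h3 : (1 - t)/w < (⌊(1 - t)/w⌋₊ : ℝ) + 1 := Nat.lt_floor_add_one _
        have h4 : 1 - t < ((⌊(1 - t)/w⌋₊ : ℝ) + 1) * w := by
          calc 1 - t = ((1 - t)/w) * w := by field_simp
            _ < ((⌊(1 - t)/w⌋₊ : ℝ) + 1) * w := by nlinarith
        rw [hj, he]; linarith
      · have hk1 : (j:ℝ) + 1 = (m:ℝ) := by
          rw [hj, he]; push_cast [Nat.cast_sub hm1]; ring
        rw [hk1]
        have h3 : (1:ℝ)/w ≤ (m:ℝ) := Nat.le_ceil _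
        have h4 : (1:ℝ) ≤ (m:ℝ) * w := by
          calc (1:ℝ) = (1/w) * w := by field_simp
            _ ≤ (m:ℝ) * w := by nlinarith
        linarith
    have hinit : Fin.init x ∈ Set.Icc (0 : Fin d → ℝ) 1 :=
      ⟨fun i => hx.1 i.castSucc, fun i => hx.2 i.castSucc⟩
    obtain ⟨q, hq, hq1, hq2⟩ := (hQ j hjm).1.2 (Fin.init x) hinit
    refine ⟨lift j q, Finset.mem_biUnion.mpr
      ⟨j, Finset.mem_range.mpr hjm, Finset.mem_image.mpr ⟨q, hq, rfl⟩⟩, ?_, ?_⟩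
    · have := snoc_le (d := d) hq1 hlo
      rwa [Fin.snoc_init_self x] at this
    · have := snoc_le (d := d) hq2 hbt
      rwa [Fin.snoc_init_self x] at this
  · -- cardinality
    have hfacpos : (0:ℝ) < (d.factorial : ℝ) := by exact_mod_cast d.factorial_pos
    set c : ℝ := (d:ℝ)^d / d.factorial with hc
    have hc0 : 0 ≤ c := by positivity
    set K : ℝ := 1/((d:ℝ)*w) + 1 with hK
    set g : ℕ → ℝ := fun j => ((d:ℝ)/(d+1)) * (K + (1 - (j:ℝ))/d)^(d+1) with hg
    have hBval : ∀ j : ℕ, b j / ((d:ℝ)*w) + 1 = K - (j:ℝ)/d := by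
      intro j
      simp only [hb, hK]
      field_simp
      ring
    have hterm : ∀ j < m, (b j / ((d:ℝ)*w) + 1)^d ≤ g j - g (j+1) := by
      intro j hjm
      have hB0 : (0:ℝ) ≤ K - (j:ℝ)/d := by
        rw [← hBval j]
        have h := (hbpos j hjm).le
        have h2 : (0:ℝ) ≤ b j / ((d:ℝ)*w) := div_nonneg h (by positivity)
        linarith
      have hdiff : (K + (1 - (j:ℝ))/d) - (K - (j:ℝ)/d) = 1/d := by ring
      have hAB : K - (j:ℝ)/d ≤ K + (1 - (j:ℝ))/d := by
        have : (0:ℝ) ≤ 1/d := by positivity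
        linarith
      have hmvt := pow_mvt d hB0 hAB
      rw [hdiff] at hmvt
      have hnn : (0:ℝ) ≤ (d:ℝ)/((d:ℝ)+1) := by positivity
      have h5 := mul_le_mul_of_nonneg_left hmvt hnn
      have hL : ((d:ℝ)/((d:ℝ)+1)) * (((d:ℝ) + 1) * (K - (j:ℝ)/d)^d * (1/d)) =
          (K - (j:ℝ)/d)^d := by
        field_simp
      have hcast : K + (1 - ((j+1:ℕ):ℝ))/d = K - (j:ℝ)/d := by push_cast; ring
      have hsub : ((d:ℝ)/((d:ℝ)+1)) * ((K + (1 - (j:ℝ))/d)^(d+1) - (K - (j:ℝ)/d)^(d+1)) =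
          ((d:ℝ)/((d:ℝ)+1)) * (K + (1 - (j:ℝ))/d)^(d+1) -
            ((d:ℝ)/((d:ℝ)+1)) * (K - (j:ℝ)/d)^(d+1) := by ring
      rw [hL, hsub] at h5
      rw [hBval j]
      simp only [hg, hcast]
      linarith [h5]
    have hsum1 : ∑ j ∈ Finset.range m, (b j/((d:ℝ)*w)+1)^d ≤ g 0 - g m := by
      calc ∑ j ∈ Finset.range m, (b j/((d:ℝ)*w)+1)^d
          ≤ ∑ j ∈ Finset.range m, (g j - g (j+1)) :=
            Finset.sum_le_sum (fun j hj => hterm j (Finset.mem_range.mp hj))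
        _ = g 0 - g m := Finset.sum_range_sub' g m
    have hgm0 : 0 ≤ g m := by
      have hb' := hbpos (m-1) (Nat.sub_lt hm1 one_pos)
      have hcast : ((m-1:ℕ):ℝ) = (m:ℝ) - 1 := by push_cast [Nat.cast_sub hm1]; ring
      simp only [hb, hcast] at hb'
      have hq1 : ((m:ℝ)-1)/d ≤ 1/((d:ℝ)*w) := by
        rw [div_le_div_iff₀ hd0 (by positivity)]
        have hm0 : (1:ℝ) ≤ (m:ℝ) := by exact_mod_cast hm1
        nlinarith
      have hq2 : (1 - (m:ℝ))/d = -(((m:ℝ)-1)/d) := by ring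
      have hbase : (0:ℝ) ≤ K + (1 - (m:ℝ))/d := by
        simp only [hK]; rw [hq2]; linarith
      simp only [hg]
      exact mul_nonneg (by positivity) (pow_nonneg hbase _)
    have hbase0 : K + (1 - ((0:ℕ):ℝ))/d = (((d:ℝ)+1)/d) * (1/δ+1) := by
      simp only [hK, hw]
      push_cast
      field_simp
      ring
    have hg0eq : g 0 = ((d:ℝ)/((d:ℝ)+1)) * ((((d:ℝ)+1)/d) * (1/δ+1))^(d+1) := by
      simp only [hg]
      rw [← hbase0]
    have hfinal : c * (((d:ℝ)/((d:ℝ)+1)) * ((((d:ℝ)+1)/d) * (1/δ+1))^(d+1)) =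
        (((d:ℝ)+1)^(d+1)/((d+1).factorial : ℝ)) * (1/δ+1)^(d+1) := by
      simp only [hc]
      rw [mul_pow, div_pow]
      push_cast [Nat.factorial_succ]
      have hdd : ((d:ℝ))^(d+1) = (d:ℝ)^d * d := by ring
      field_simp
      ring
    have hcard1 : ((((Finset.range m).biUnion (fun j => (Q j).image (lift j))).card : ℝ))
        ≤ ∑ j ∈ Finset.range m, ((Q j).card : ℝ) := by
      have h := Finset.card_biUnion_le (s := Finset.range m)
        (t := fun j => (Q j).image (lift j))
      calc ((((Finset.range m).biUnion (fun j => (Q j).image (lift j))).card : ℝ))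
          ≤ ((∑ j ∈ Finset.range m, ((Q j).image (lift j)).card : ℕ) : ℝ) := by
            exact_mod_cast h
        _ = ∑ j ∈ Finset.range m, (((Q j).image (lift j)).card : ℝ) := by push_cast; rfl
        _ ≤ ∑ j ∈ Finset.range m, ((Q j).card : ℝ) :=
            Finset.sum_le_sum (fun j _ => by exact_mod_cast Finset.card_image_le)
    calc ((((Finset.range m).biUnion (fun j => (Q j).image (lift j))).card : ℝ))
        ≤ ∑ j ∈ Finset.range m, ((Q j).card : ℝ) := hcard1
      _ ≤ ∑ j ∈ Finset.range m, c * (b j / ((d:ℝ)*w) + 1)^d :=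
          Finset.sum_le_sum (fun j hj => (hQ j (Finset.mem_range.mp hj)).2)
      _ = c * ∑ j ∈ Finset.range m, (b j / ((d:ℝ)*w) + 1)^d := by rw [Finset.mul_sum]
      _ ≤ c * (g 0 - g m) := mul_le_mul_of_nonneg_left hsum1 hc0
      _ ≤ c * g 0 := by nlinarith
      _ = (((d:ℝ)+1)^(d+1)/((d+1).factorial : ℝ)) * (1/δ+1)^(d+1) := by
          rw [hg0eq, hfinal]

lemma grid_exists (d : ℕ) (hd : 1 ≤ d) : ∀ δ : ℝ, 0 < δ →
    ∃ P : Finset ((Fin d → ℝ) × (Fin d → ℝ)), GoodGrid d δ P ∧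
      (P.card : ℝ) ≤ ((d:ℝ)^d / d.factorial) * (1/δ+1)^d := by
  induction d, hd using Nat.le_induction with
  | base =>
    intro δ hδ
    obtain ⟨P, h1, h2⟩ := base_grid δ hδ
    refine ⟨P, h1, ?_⟩
    simpa [Nat.factorial] using h2
  | succ d hd IH =>
    intro δ hδ
    obtain ⟨P, h1, h2⟩ := step_grid d hd IH δ hδ
    refine ⟨P, h1, ?_⟩
    push_cast at h2 ⊢
    exact h2

lemma cover_of_grid {d : ℕ} {δ : ℝ} (hδ : 0 < δ)
    {P : Finset ((Fin d → ℝ) × (Fin d → ℝ))} (hP : GoodGrid d δ P) :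
    IsBracketingCover δ (anchoredFamily d)
      ((fun p : (Fin d → ℝ) × (Fin d → ℝ) => (box p.1, box p.2)) '' ↑P) := by
  classical
  obtain ⟨hgood, hcov⟩ := hP
  refine ⟨?_, ?_, ?_⟩
  · rintro q hq
    simp only [Set.mem_image, Finset.mem_coe] at hq
    obtain ⟨p, hp, rfl⟩ := hq
    obtain ⟨h1, h2, _, _⟩ := hgood p hp
    exact ⟨box_mem h1, box_mem h2⟩
  · rintro q hq
    simp only [Set.mem_image, Finset.mem_coe] at hq
    obtain ⟨p, hp, rfl⟩ := hq
    obtain ⟨h1, h2, h3, h4⟩ := hgood p hp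
    refine ⟨box_mono h3, ?_⟩
    have hvol : volume (box p.2 \ box p.1) = volume (box p.2) - volume (box p.1) :=
      measure_diff (box_mono h3) (measurable_box _).nullMeasurableSet
        (by rw [vol_box _ (fun i => h1.1 i)]; exact ENNReal.ofReal_ne_top)
    rw [hvol, vol_box _ (fun i => h1.1 i), vol_box _ (fun i => h2.1 i)]
    rw [tsub_le_iff_right, ← ENNReal.ofReal_add hδ.le
      (Finset.prod_nonneg fun i _ => h1.1 i)]
    apply ENNReal.ofReal_le_ofReal
    linarith
  · rintro A hA
    obtain ⟨x, hx, rfl⟩ := hA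
    obtain ⟨p, hp, h1, h2⟩ := hcov x hx
    refine ⟨(box p.1, box p.2), ?_, box_mono h1, box_mono h2⟩
    simp only [Set.mem_image, Finset.mem_coe]
    exact ⟨p, hp, rfl⟩

end BrAux

theorem bracketNum_anchoredFamily_le (s : ℕ) (hs : 1 ≤ s) (δ : ℝ)
    (hδ : δ ∈ Set.Ioc (0 : ℝ) 1) :
    (bracketNum δ (anchoredFamily s) : ℝ≥0∞) ≤
      ENNReal.ofReal
        (max 1 ((1.1 : ℝ) ^ ((s : ℤ) - 101)) * ((s : ℝ) ^ s / (Nat.factorial s)) *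
          (1 / δ + 1) ^ s) := by
  classical
  obtain ⟨P, hP, hcard⟩ := BrAux.grid_exists s hs δ hδ.1
  set Δ := P.image (fun p => (BrAux.box p.1, BrAux.box p.2)) with hΔ
  have hcov : IsBracketingCover δ (anchoredFamily s) ↑Δ := by
    rw [hΔ, Finset.coe_image]
    exact BrAux.cover_of_grid hδ.1 hP
  have h1 : bracketNum δ (anchoredFamily s) ≤ (Δ.card : ℕ∞) :=
    sInf_le ⟨↑Δ, hcov, Set.encard_coe_eq_coe_finsetCard Δ⟩
  have h2 : (Δ.card : ℝ) ≤ ((s:ℝ)^s / s.factorial) * (1/δ+1)^s :=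
    le_trans (by exact_mod_cast Finset.card_image_le) hcard
  have hnn : (0:ℝ) ≤ ((s:ℝ)^s / s.factorial) * (1/δ+1)^s := by
    have h0 : (0:ℝ) ≤ 1/δ := le_of_lt (div_pos one_pos hδ.1)
    exact mul_nonneg (div_nonneg (pow_nonneg (Nat.cast_nonneg s) s) (Nat.cast_nonneg _))
      (pow_nonneg (by linarith) s)
  have h3 : (Δ.card : ℝ) ≤
      max 1 ((1.1 : ℝ) ^ ((s : ℤ) - 101)) * ((s : ℝ) ^ s / (Nat.factorial s)) *
        (1 / δ + 1) ^ s := by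
    rw [mul_assoc]
    calc (Δ.card : ℝ) ≤ ((s:ℝ)^s / s.factorial) * (1/δ+1)^s := h2
      _ ≤ max 1 ((1.1 : ℝ) ^ ((s : ℤ) - 101)) * (((s:ℝ)^s / s.factorial) * (1/δ+1)^s) :=
          le_mul_of_one_le_left hnn (le_max_left _ _)
  calc (bracketNum δ (anchoredFamily s) : ℝ≥0∞)
      ≤ ((Δ.card : ℕ∞) : ℝ≥0∞) := ENat.toENNReal_le.mpr h1
    _ = (Δ.card : ℝ≥0∞) := by simp
    _ = ENNReal.ofReal (Δ.card : ℝ) := (ENNReal.ofReal_natCast _).symm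
    _ ≤ _ := ENNReal.ofReal_le_ofReal h3
end

section
/- Let b_k be defined by b_{−1} = b_0 = 3 and b_k = 2^{−k+3}(1−2^{−k}) for k ≥ 1, and for fixed s ≥ 1 and M ≥ 2 define a_{k,s} = b_k·( ln((C_s²/π)·2^{k+2})/s + 2·ln(2e·(2^{k+2}+1)) ) for k ≥ 0 (with a_{−1,s} = a_{0,s}), and y_{k,s} = α·a_{k,s} + β·b_k·ln(M)/s for fixed α, β ≥ 1. Then y_{k,s} is decreasing in k for k ≥ 0. -/
set_option maxHeartbeats 1000000 in

theorem y_antitone (s M : ℕ) (hs : 1 ≤ s) (hM : 2 ≤ M)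
    (α β : ℝ) (hα : 1 ≤ α) (hβ : 1 ≤ β)
    (Cs : ℝ) (hCs : Cs = max 1 ((1.1 : ℝ) ^ ((s : ℤ) - 101)))
    (b : ℕ → ℝ) (hb0 : b 0 = 3)
    (hb : ∀ k : ℕ, 1 ≤ k → b k = (2 : ℝ) ^ (-(k : ℤ) + 3) * (1 - (2 : ℝ) ^ (-(k : ℤ))))
    (a : ℕ → ℝ)
    (ha : ∀ k : ℕ,
      a k = b k * (Real.log (Cs ^ 2 / Real.pi * (2 : ℝ) ^ ((k : ℤ) + 2)) / s +
        2 * Real.log (2 * Real.exp 1 * ((2 : ℝ) ^ ((k : ℤ) + 2) + 1))))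
    (y : ℕ → ℝ) (hy : ∀ k : ℕ, y k = α * a k + β * b k * Real.log M / s) :
    Antitone y := by
  have hs0 : (0:ℝ) < (s:ℝ) := by exact_mod_cast Nat.pos_of_ne_zero (by omega)
  have hs1 : (1:ℝ) ≤ (s:ℝ) := by exact_mod_cast hs
  have hCs1 : (1:ℝ) ≤ Cs := by rw [hCs]; exact le_max_left _ _
  have hlog2pos : (0:ℝ) < Real.log 2 := Real.log_pos (by norm_num)
  have hlog2lt : Real.log 2 < 0.6931471808 := Real.log_two_lt_d9
  have hexp : Real.exp 1 < 2.7182818286 := Real.exp_one_lt_d9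
  have hexpgt : (2.7182818283:ℝ) < Real.exp 1 := Real.exp_one_gt_d9
  have hexp32 : Real.exp (3/2) < 5 := by
    have h3 : Real.exp (3/2) * Real.exp (3/2) = Real.exp 1 * (Real.exp 1 * Real.exp 1) := by
      rw [← Real.exp_add, ← Real.exp_add, ← Real.exp_add]; norm_num
    nlinarith [Real.exp_pos (3/2 : ℝ), Real.exp_pos (1:ℝ)]
  have hlog5 : (3/2 : ℝ) ≤ Real.log 5 := by
    have h := Real.log_le_log (Real.exp_pos (3/2)) hexp32.le
    rwa [Real.log_exp] at h
  have hlogM : (0:ℝ) ≤ Real.log M := Real.log_nonneg (by exact_mod_cast Nat.one_le_of_lt hM)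
  -- b lemmas
  have hbkey : ∀ k : ℕ, 0 ≤ b k ∧ b (k+1) ≤ 3/4 * b k := by
    intro k
    rcases Nat.eq_zero_or_pos k with h0 | h1
    · subst h0
      rw [hb0, hb 1 le_rfl]
      norm_num
    · have hx0 : (0:ℝ) < (2:ℝ)^(-(k:ℤ)) := by positivity
      have hxle : (2:ℝ)^(-(k:ℤ)) ≤ 1/2 := by
        rw [zpow_neg, zpow_natCast]
        rw [inv_le_comm₀ (by positivity) (by norm_num)]
        calc (1/2 : ℝ)⁻¹ = 2^1 := by norm_num
        _ ≤ (2:ℝ)^k := pow_le_pow_right₀ one_le_two h1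
      set x := (2:ℝ)^(-(k:ℤ)) with hxdef
      have e1 : (2:ℝ)^(-(k:ℤ)+3) = x * 8 := by
        rw [zpow_add₀ (two_ne_zero), ← hxdef]; norm_num
      have e2 : (2:ℝ)^(-((k:ℤ)+1)+3) = x * 4 := by
        rw [show -((k:ℤ)+1)+3 = -(k:ℤ)+2 by ring, zpow_add₀ (two_ne_zero), ← hxdef]; norm_num
      have e3 : (2:ℝ)^(-((k:ℤ)+1)) = x / 2 := by
        rw [show -((k:ℤ)+1) = -(k:ℤ)+(-1) by ring, zpow_add₀ (two_ne_zero), ← hxdef]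
        norm_num
        ring
      constructor
      · rw [hb k h1, e1]; nlinarith
      · rw [hb k h1, hb (k+1) (by omega)]
        push_cast
        rw [e1, e2, e3]
        nlinarith
  apply antitone_nat_of_succ_le
  intro k
  rw [hy, hy, ha, ha]
  push_cast
  have hX4 : (4:ℝ) ≤ (2:ℝ)^((k:ℤ)+2) := by
    have h1 : (1:ℝ) ≤ (2:ℝ)^(k:ℤ) := one_le_zpow₀ one_le_two (by positivity)
    rw [zpow_add₀ (two_ne_zero)]
    nlinarith
  have hE : (2:ℝ)^((k:ℤ)+1+2) = 2 * (2:ℝ)^((k:ℤ)+2) := by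
    rw [show (k:ℤ)+1+2 = 1+((k:ℤ)+2) by ring, zpow_add₀ (two_ne_zero)]
    norm_num
  rw [hE]
  set X := (2:ℝ)^((k:ℤ)+2) with hXdef
  set A := Cs^2 / Real.pi * X with hAdef
  have hA1 : (1:ℝ) ≤ A := by
    rw [hAdef, div_mul_eq_mul_div, le_div_iff₀ Real.pi_pos]
    nlinarith [Real.pi_lt_d2, sq_nonneg Cs, sq_nonneg (Cs - 1)]
  have hA0 : (0:ℝ) < A := lt_of_lt_of_le one_pos hA1
  have hLA0 : (0:ℝ) ≤ Real.log A := Real.log_nonneg hA1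
  have ht1 : Real.log (Cs^2 / Real.pi * (2*X)) = Real.log 2 + Real.log A := by
    rw [show Cs^2 / Real.pi * (2*X) = 2 * A by rw [hAdef]; ring,
      Real.log_mul two_ne_zero (ne_of_gt hA0)]
  rw [ht1]
  set T := Real.log (2 * Real.exp 1 * (X+1)) with hTdef
  set T' := Real.log (2 * Real.exp 1 * (2*X+1)) with hT'def
  have hT : Real.log 2 + 5/2 ≤ T := by
    have h1 : (2:ℝ)*Real.exp 1*5 ≤ 2*Real.exp 1*(X+1) := by nlinarith [Real.exp_pos 1]
    have h2 : Real.log (2*Real.exp 1*5) ≤ T := Real.log_le_log (by positivity) h1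
    have h3 : Real.log ((2:ℝ)*Real.exp 1*5) = Real.log 2 + 1 + Real.log 5 := by
      rw [Real.log_mul (by positivity) (by norm_num),
        Real.log_mul (by norm_num) (Real.exp_ne_zero 1), Real.log_exp]
    linarith
  have hT'0 : (0:ℝ) ≤ T' := Real.log_nonneg (by nlinarith)
  have hT'le : T' ≤ Real.log 2 + T := by
    have h5 : (2:ℝ)*Real.exp 1*(2*X+1) ≤ 2*(2*Real.exp 1*(X+1)) := by
      nlinarith [Real.exp_pos 1]
    calc T' ≤ Real.log (2*(2*Real.exp 1*(X+1))) := Real.log_le_log (by positivity) h5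
    _ = Real.log 2 + T := Real.log_mul two_ne_zero (by positivity)
  -- abbreviations for the final estimate
  have hdiv : (Real.log 2 + Real.log A)/s ≤ Real.log A / s + Real.log 2 := by
    rw [add_div]
    have := div_le_self hlog2pos.le hs1
    linarith
  set L' := (Real.log 2 + Real.log A)/s + 2*T' with hL'def
  set L := Real.log A / s + 2*T with hLdef
  have hLlb : 9 * Real.log 2 ≤ L := by
    have h1 : (0:ℝ) ≤ Real.log A / s := by positivity
    rw [hLdef]; nlinarith
  have hL'le : L' ≤ L + 3 * Real.log 2 := by
    rw [hL'def, hLdef]; linarith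
  have hL'0 : (0:ℝ) ≤ L' := by
    have h1 : (0:ℝ) ≤ (Real.log 2 + Real.log A)/s := by positivity
    rw [hL'def]; linarith
  have hc0 : (0:ℝ) ≤ β * Real.log M / s := by positivity
  clear_value X A T T' L' L
  have hα0 : (0:ℝ) ≤ α := le_trans zero_le_one hα
  have hmain : α * L' + β * Real.log M / s ≤ (4/3) * (α * L + β * Real.log M / s) := by
    have h1 : α * L' ≤ α * (L + 3 * Real.log 2) := mul_le_mul_of_nonneg_left hL'le hα0
    have h2 : α * (9 * Real.log 2) ≤ α * L := mul_le_mul_of_nonneg_left hLlb hα0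
    have h3 : α * (L + 3 * Real.log 2) = α * L + 3 * (α * Real.log 2) := by ring
    have h4 : α * (9 * Real.log 2) = 9 * (α * Real.log 2) := by ring
    linarith
  have hnn1 : (0:ℝ) ≤ α * L' + β * Real.log M / s := by positivity
  have hnn2 : (0:ℝ) ≤ 3/4 * b k := by linarith [(hbkey k).1]
  calc α * (b (k+1) * L') + β * b (k+1) * Real.log M / s
      = b (k+1) * (α * L' + β * Real.log M / s) := by ring
    _ ≤ (3/4 * b k) * ((4/3) * (α * L + β * Real.log M / s)) :=
        mul_le_mul (hbkey k).2 hmain hnn1 hnn2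
    _ = b k * (α * L + β * Real.log M / s) := by ring
    _ = α * (b k * L) + β * b k * Real.log M / s := by ring
end
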